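/- arXiv:2101.11665 — 7 statements merged into one kernel-verified Lean document; each statement's English description precedes it below -/
import Mathlib

section
/- Let Ω be a finite probability space modeling sequential sampling without replacement of M indices i_1,...,i_M from {1,...,N} (M ≤ N) where the conditional distribution of i_m given i_{1:m-1} is any probability mass function q_m supported on the unsampled indices. Let L : {1,...,N} → ℝ be fixed losses, w_m = 1/(N·q_m(i_m)), and a_m = w_m·L(i_m) + (1/N)∑_{t=1}^{m-1} L(i_t). Then E[a_m] = (1/N)∑_{n=1}^N L(n). -/
/-!
Sequential sampling without replacement of `M` indices from a pool `{1,…,N}`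
(modelled as `Fin N`). A trajectory is a function `σ : Fin M → Fin N`;
`q m σ i` is the conditional probability that the `(m+1)`-st acquired index is
`i` given the history `σ 0, …, σ (m-1)` (it is assumed to depend only on that
history). Expectations are sums over injective trajectories weighted by the
product of conditional probabilities.
-/

/-- Probability of a trajectory `σ` under the sequential proposals `q`. -/
noncomputable def prob (N M : ℕ) (q : Fin M → (Fin M → Fin N) → Fin N → ℝ)
    (σ : Fin M → Fin N) : ℝ :=
  ∏ m : Fin M, q m σ (σ m)

/-- Expectation of a trajectory functional under sequential sampling without
replacement with proposals `q`. -/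
noncomputable def expec (N M : ℕ) (q : Fin M → (Fin M → Fin N) → Fin N → ℝ)
    (f : (Fin M → Fin N) → ℝ) : ℝ :=
  ∑ σ : Fin M → Fin N, if Function.Injective σ then prob N M q σ * f σ else 0

/-- The PURE term `a_m = w_m·L(i_m) + (1/N)∑_{t<m} L(i_t)` with
`w_m = 1/(N·q_m(i_m))` (here `m : Fin M` is zero-based). -/
noncomputable def aTerm (N M : ℕ) (L : Fin N → ℝ)
    (q : Fin M → (Fin M → Fin N) → Fin N → ℝ) (m : Fin M)
    (σ : Fin M → Fin N) : ℝ :=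
  L (σ m) / ((N : ℝ) * q m σ (σ m))
    + (1 / (N : ℝ)) * ∑ t : Fin M, if (t : ℕ) < (m : ℕ) then L (σ t) else 0

/-- The conditional variance `Var[w_m·L(i_m) | i_{1:m-1}]` as a function of the
history (it depends on `σ` only through `σ 0, …, σ (m-1)`). -/
noncomputable def condVar (N M : ℕ) (L : Fin N → ℝ)
    (q : Fin M → (Fin M → Fin N) → Fin N → ℝ) (m : Fin M)
    (σ : Fin M → Fin N) : ℝ :=
  (∑ i : Fin N, q m σ i * (L i / ((N : ℝ) * q m σ i)) ^ 2)
    - (∑ i : Fin N, q m σ i * (L i / ((N : ℝ) * q m σ i))) ^ 2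

open Finset Function

lemma PURE.sum_update {M N : ℕ} (j : Fin M) (F : (Fin M → Fin N) → ℝ) :
    ∑ σ : Fin M → Fin N, ∑ i : Fin N, F (Function.update σ j i)
      = (N : ℝ) * ∑ σ : Fin M → Fin N, F σ := by
  let e : ((Fin M → Fin N) × Fin N) ≃ ((Fin M → Fin N) × Fin N) :=
    { toFun := fun p => (Function.update p.1 j p.2, p.1 j)
      invFun := fun p => (Function.update p.1 j p.2, p.1 j)
      left_inv := fun p => by
        simp [Function.update_idem, Function.update_eq_self]
      right_inv := fun p => by
        simp [Function.update_idem, Function.update_eq_self] }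
  have h := Equiv.sum_comp e (fun p => F p.1)
  simp only [Fintype.sum_prod_type] at h
  calc ∑ σ : Fin M → Fin N, ∑ i : Fin N, F (Function.update σ j i)
      = ∑ σ : Fin M → Fin N, ∑ i : Fin N, F ((e (σ, i)).1) := rfl
    _ = ∑ σ : Fin M → Fin N, ∑ _i : Fin N, F σ := h
    _ = (N : ℝ) * ∑ σ : Fin M → Fin N, F σ := by
        simp [Finset.sum_const, mul_comm, Finset.mul_sum]

/-- Partial-trajectory expectation: only the first `j` coordinates are
constrained to be distinct and weighted by the proposals. -/
noncomputable def PURE.Qsum (N M : ℕ) (q : Fin M → (Fin M → Fin N) → Fin N → ℝ)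
    (j : ℕ) (g : (Fin M → Fin N) → ℝ) : ℝ :=
  ∑ σ : Fin M → Fin N,
    if ∀ k l : Fin M, (k : ℕ) < j → (l : ℕ) < j → σ k = σ l → k = l
    then (∏ k : Fin M, if (k : ℕ) < j then q k σ (σ k) else 1) * g σ else 0

open PURE

lemma PURE.Qsum_succ {N M : ℕ} (q : Fin M → (Fin M → Fin N) → Fin N → ℝ)
    (hdep : ∀ (m : Fin M) (σ σ' : Fin M → Fin N),
      (∀ k : Fin M, (k : ℕ) < (m : ℕ) → σ k = σ' k) → q m σ = q m σ')
    (j : Fin M) (g h : (Fin M → Fin N) → ℝ)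
    (hstep : ∀ σ : Fin M → Fin N,
      (∀ k l : Fin M, (k : ℕ) < (j : ℕ) → (l : ℕ) < (j : ℕ) → σ k = σ l → k = l) →
      ∑ i : Fin N, (if ∀ k : Fin M, (k : ℕ) < (j : ℕ) → σ k ≠ i
        then q j σ i * g (Function.update σ j i) else 0) = h σ) :
    (N : ℝ) * Qsum N M q ((j : ℕ) + 1) g = Qsum N M q (j : ℕ) h := by
  rw [Qsum, ← PURE.sum_update j]
  rw [Qsum]
  refine Finset.sum_congr rfl fun σ _ => ?_
  have hne : ∀ i, ∀ k : Fin M, (k : ℕ) < (j : ℕ) → Function.update σ j i k = σ k :=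
    fun i k hk => Function.update_of_ne (ne_of_lt (show k < j from hk)) _ _
  have hq : ∀ i, ∀ k : Fin M, (k : ℕ) ≤ (j : ℕ) →
      q k (Function.update σ j i) = q k σ := fun i k hk =>
    hdep k _ _ (fun k' hk' => hne i k' (lt_of_lt_of_le hk' hk))
  have hcond : ∀ i : Fin N,
      (∀ k l : Fin M, (k : ℕ) < (j : ℕ) + 1 → (l : ℕ) < (j : ℕ) + 1 →
        Function.update σ j i k = Function.update σ j i l → k = l)
      ↔ ((∀ k l : Fin M, (k : ℕ) < (j : ℕ) → (l : ℕ) < (j : ℕ) → σ k = σ l → k = l)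
          ∧ ∀ k : Fin M, (k : ℕ) < (j : ℕ) → σ k ≠ i) := by
    intro i
    constructor
    · intro H
      refine ⟨fun k l hk hl hkl => H k l (Nat.lt_succ_of_lt hk) (Nat.lt_succ_of_lt hl)
        (by rw [hne i k hk, hne i l hl]; exact hkl), fun k hk hki => ?_⟩
      have : k = j := H k j (Nat.lt_succ_of_lt hk) (Nat.lt_succ_self _)
        (by rw [hne i k hk, Function.update_self]; exact hki)
      exact absurd (this ▸ hk) (lt_irrefl _)
    · rintro ⟨H1, H2⟩ k l hk hl hkl
      rcases Nat.lt_succ_iff_lt_or_eq.mp hk with hk' | hk' <;>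
        rcases Nat.lt_succ_iff_lt_or_eq.mp hl with hl' | hl'
      · exact H1 k l hk' hl' (by rw [hne i k hk', hne i l hl'] at hkl; exact hkl)
      · have hlj : l = j := Fin.ext hl'
        subst hlj
        rw [hne i k hk', Function.update_self] at hkl
        exact absurd hkl (H2 k hk')
      · have hkj : k = j := Fin.ext hk'
        subst hkj
        rw [hne i l hl', Function.update_self] at hkl
        exact absurd hkl.symm (H2 l hl')
      · exact Fin.ext (hk'.trans hl'.symm)
  have key : ∀ i : Fin N,
      (if ∀ k l : Fin M, (k : ℕ) < (j : ℕ) + 1 → (l : ℕ) < (j : ℕ) + 1 →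
          Function.update σ j i k = Function.update σ j i l → k = l
       then (∏ k : Fin M, if (k : ℕ) < (j : ℕ) + 1
              then q k (Function.update σ j i) (Function.update σ j i k) else 1)
            * g (Function.update σ j i) else 0)
      = (if ∀ k l : Fin M, (k : ℕ) < (j : ℕ) → (l : ℕ) < (j : ℕ) → σ k = σ l → k = l
         then (∏ k : Fin M, if (k : ℕ) < (j : ℕ) then q k σ (σ k) else 1)
            * (if ∀ k : Fin M, (k : ℕ) < (j : ℕ) → σ k ≠ i
                then q j σ i * g (Function.update σ j i) else 0) else 0) := by
    intro i
    have hprod : (∏ k : Fin M, if (k : ℕ) < (j : ℕ) + 1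
          then q k (Function.update σ j i) (Function.update σ j i k) else 1)
        = q j σ i * ∏ k : Fin M, if (k : ℕ) < (j : ℕ) then q k σ (σ k) else 1 := by
      rw [← Finset.mul_prod_erase univ
          (fun k : Fin M => if (k : ℕ) < (j : ℕ) + 1
            then q k (Function.update σ j i) (Function.update σ j i k) else 1)
          (Finset.mem_univ j),
        ← Finset.mul_prod_erase univ
          (fun k : Fin M => if (k : ℕ) < (j : ℕ) then q k σ (σ k) else 1)
          (Finset.mem_univ j)]
      rw [if_pos (Nat.lt_succ_self _), if_neg (lt_irrefl _), hq i j le_rfl,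
        Function.update_self, one_mul]
      congr 1
      refine Finset.prod_congr rfl fun k hk => ?_
      have hkj : k ≠ j := (Finset.mem_erase.mp hk).1
      by_cases hklt : (k : ℕ) < (j : ℕ)
      · rw [if_pos (Nat.lt_succ_of_lt hklt), if_pos hklt, hq i k (le_of_lt hklt),
          hne i k hklt]
      · have : ¬ (k : ℕ) < (j : ℕ) + 1 := by
          intro hc
          rcases Nat.lt_succ_iff_lt_or_eq.mp hc with h' | h'
          · exact hklt h'
          · exact hkj (Fin.ext h')
        rw [if_neg this, if_neg hklt]
    by_cases hinj : ∀ k l : Fin M, (k : ℕ) < (j : ℕ) → (l : ℕ) < (j : ℕ) → σ k = σ l → k = l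
    · rw [if_pos hinj]
      by_cases hfresh : ∀ k : Fin M, (k : ℕ) < (j : ℕ) → σ k ≠ i
      · rw [if_pos ((hcond i).mpr ⟨hinj, hfresh⟩), if_pos hfresh, hprod]
        ring
      · rw [if_neg (fun H => hfresh ((hcond i).mp H).2), if_neg hfresh, mul_zero]
    · rw [if_neg hinj, if_neg (fun H => hinj ((hcond i).mp H).1)]
  calc ∑ i : Fin N, _ = _ := Finset.sum_congr rfl fun i _ => key i
    _ = _ := by
        by_cases hinj : ∀ k l : Fin M, (k : ℕ) < (j : ℕ) → (l : ℕ) < (j : ℕ) → σ k = σ l → k = l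
        · simp only [if_pos hinj, ← Finset.mul_sum, hstep σ hinj]
        · simp only [if_neg hinj, Finset.sum_const_zero]

lemma PURE.sum_fresh {N M : ℕ} (q : Fin M → (Fin M → Fin N) → Fin N → ℝ)
    (hzero : ∀ (m : Fin M) (σ : Fin M → Fin N) (i : Fin N),
      (∃ k : Fin M, (k : ℕ) < (m : ℕ) ∧ σ k = i) → q m σ i = 0)
    (hsum : ∀ (m : Fin M) (σ : Fin M → Fin N), ∑ i : Fin N, q m σ i = 1)
    (j : Fin M) (σ : Fin M → Fin N) :
    ∑ i : Fin N, (if ∀ k : Fin M, (k : ℕ) < (j : ℕ) → σ k ≠ i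
      then q j σ i else 0) = 1 := by
  rw [← hsum j σ]
  refine Finset.sum_congr rfl fun i _ => ?_
  by_cases hfresh : ∀ k : Fin M, (k : ℕ) < (j : ℕ) → σ k ≠ i
  · rw [if_pos hfresh]
  · rw [if_neg hfresh]
    push_neg at hfresh
    obtain ⟨k, hk, hki⟩ := hfresh
    exact (hzero j σ i ⟨k, hk, hki⟩).symm

lemma PURE.Qsum_one {N M : ℕ} (q : Fin M → (Fin M → Fin N) → Fin N → ℝ)
    (hdep : ∀ (m : Fin M) (σ σ' : Fin M → Fin N),
      (∀ k : Fin M, (k : ℕ) < (m : ℕ) → σ k = σ' k) → q m σ = q m σ')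
    (hzero : ∀ (m : Fin M) (σ : Fin M → Fin N) (i : Fin N),
      (∃ k : Fin M, (k : ℕ) < (m : ℕ) ∧ σ k = i) → q m σ i = 0)
    (hsum : ∀ (m : Fin M) (σ : Fin M → Fin N), ∑ i : Fin N, q m σ i = 1)
    (hN : (N : ℝ) ≠ 0) :
    ∀ j : ℕ, j ≤ M → Qsum N M q j (fun _ => 1) = (N : ℝ) ^ (M - j) := by
  intro j
  induction j with
  | zero =>
    intro _
    simp [Qsum]
  | succ j ih =>
    intro hj
    have hjM : j < M := hj
    have hs := PURE.Qsum_succ q hdep ⟨j, hjM⟩ (fun _ => 1) (fun _ => 1)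
      (fun σ _ => by
        simpa using PURE.sum_fresh q hzero hsum ⟨j, hjM⟩ σ)
    simp only [Fin.val_mk] at hs
    rw [ih (le_of_lt hjM)] at hs
    have hMj : M - j = (M - (j + 1)) + 1 := by omega
    rw [hMj, pow_succ] at hs
    exact mul_left_cancel₀ hN (by rw [hs]; ring)

lemma PURE.aTerm_update {N M : ℕ} (L : Fin N → ℝ)
    (q : Fin M → (Fin M → Fin N) → Fin N → ℝ)
    (hdep : ∀ (m : Fin M) (σ σ' : Fin M → Fin N),
      (∀ k : Fin M, (k : ℕ) < (m : ℕ) → σ k = σ' k) → q m σ = q m σ')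
    (m j : Fin M) (hmj : (m : ℕ) < (j : ℕ)) (σ : Fin M → Fin N) (i : Fin N) :
    aTerm N M L q m (Function.update σ j i) = aTerm N M L q m σ := by
  have hne : ∀ k : Fin M, (k : ℕ) ≤ (m : ℕ) → Function.update σ j i k = σ k :=
    fun k hk => Function.update_of_ne (ne_of_lt (show k < j from lt_of_le_of_lt hk hmj)) _ _
  unfold aTerm
  rw [hne m le_rfl, hdep m (Function.update σ j i) σ (fun k hk => hne k (le_of_lt hk))]
  congr 2
  refine Finset.sum_congr rfl fun t _ => ?_
  by_cases ht : (t : ℕ) < (m : ℕ)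
  · rw [if_pos ht, if_pos ht, hne t (le_of_lt ht)]
  · rw [if_neg ht, if_neg ht]

/-- Each PURE term `a_m` is an unbiased estimator of the pool risk:
`E[a_m] = (1/N)∑_n L(n)`. -/
theorem aTerm_unbiased (N M : ℕ) (hM : 0 < M) (hMN : M ≤ N)
    (L : Fin N → ℝ) (q : Fin M → (Fin M → Fin N) → Fin N → ℝ)
    (hdep : ∀ (m : Fin M) (σ σ' : Fin M → Fin N),
      (∀ k : Fin M, (k : ℕ) < (m : ℕ) → σ k = σ' k) → q m σ = q m σ')
    (hpos : ∀ (m : Fin M) (σ : Fin M → Fin N) (i : Fin N),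
      (∀ k : Fin M, (k : ℕ) < (m : ℕ) → σ k ≠ i) → 0 < q m σ i)
    (hzero : ∀ (m : Fin M) (σ : Fin M → Fin N) (i : Fin N),
      (∃ k : Fin M, (k : ℕ) < (m : ℕ) ∧ σ k = i) → q m σ i = 0)
    (hsum : ∀ (m : Fin M) (σ : Fin M → Fin N), ∑ i : Fin N, q m σ i = 1) :
    ∀ m : Fin M, expec N M q (aTerm N M L q m) = (1 / (N : ℝ)) * ∑ n : Fin N, L n := by
  intro m
  have hNpos : 0 < N := lt_of_lt_of_le hM hMN
  have hN : (N : ℝ) ≠ 0 := Nat.cast_ne_zero.mpr hNpos.ne'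
  set C : ℝ := (1 / (N : ℝ)) * ∑ n : Fin N, L n with hC
  -- Step 0 : `expec` is `Qsum` at level `M`.
  have h0 : expec N M q (aTerm N M L q m) = Qsum N M q M (aTerm N M L q m) := by
    rw [expec, Qsum]
    refine Finset.sum_congr rfl fun σ _ => ?_
    by_cases hσ : Function.Injective σ
    · rw [if_pos hσ, if_pos (fun k l _ _ hkl => hσ hkl)]
      congr 1
      rw [prob]
      exact Finset.prod_congr rfl fun k _ => (if_pos k.isLt).symm
    · rw [if_neg hσ, if_neg (fun H => hσ (fun {k l} hkl => H k l k.isLt l.isLt hkl))]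
  -- Tail marginalization above level m+1.
  have tail : ∀ d : ℕ, (m : ℕ) + 1 + d ≤ M →
      Qsum N M q ((m : ℕ) + 1 + d) (aTerm N M L q m)
        = (1 / (N : ℝ)) ^ d * Qsum N M q ((m : ℕ) + 1) (aTerm N M L q m) := by
    intro d
    induction d with
    | zero => intro _; simp
    | succ d ih =>
      intro hle
      have hlt : (m : ℕ) + 1 + d < M := by omega
      have hmj : (m : ℕ) < ((⟨(m : ℕ) + 1 + d, hlt⟩ : Fin M) : ℕ) := by
        simp only [Fin.val_mk]; omega
      have hstep : ∀ σ : Fin M → Fin N,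
          (∀ k l : Fin M, (k : ℕ) < (m : ℕ) + 1 + d → (l : ℕ) < (m : ℕ) + 1 + d →
            σ k = σ l → k = l) →
          ∑ i : Fin N,
            (if ∀ k : Fin M, (k : ℕ) < (((⟨(m : ℕ) + 1 + d, hlt⟩ : Fin M)) : ℕ) → σ k ≠ i
              then q ⟨(m : ℕ) + 1 + d, hlt⟩ σ i
                * aTerm N M L q m (Function.update σ ⟨(m : ℕ) + 1 + d, hlt⟩ i) else 0)
            = aTerm N M L q m σ := by
        intro σ _
        have : ∀ i : Fin N,
            (if ∀ k : Fin M, (k : ℕ) < (((⟨(m : ℕ) + 1 + d, hlt⟩ : Fin M)) : ℕ) → σ k ≠ i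
              then q ⟨(m : ℕ) + 1 + d, hlt⟩ σ i
                * aTerm N M L q m (Function.update σ ⟨(m : ℕ) + 1 + d, hlt⟩ i) else 0)
            = (if ∀ k : Fin M, (k : ℕ) < (((⟨(m : ℕ) + 1 + d, hlt⟩ : Fin M)) : ℕ) → σ k ≠ i
                then q ⟨(m : ℕ) + 1 + d, hlt⟩ σ i else 0) * aTerm N M L q m σ := by
          intro i
          by_cases hfresh : ∀ k : Fin M,
              (k : ℕ) < (((⟨(m : ℕ) + 1 + d, hlt⟩ : Fin M)) : ℕ) → σ k ≠ i
          · rw [if_pos hfresh, if_pos hfresh,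
              PURE.aTerm_update L q hdep m ⟨(m : ℕ) + 1 + d, hlt⟩ hmj σ i]
          · rw [if_neg hfresh, if_neg hfresh, zero_mul]
        rw [Finset.sum_congr rfl fun i _ => this i, ← Finset.sum_mul,
          PURE.sum_fresh q hzero hsum ⟨(m : ℕ) + 1 + d, hlt⟩ σ, one_mul]
      have hs := PURE.Qsum_succ q hdep ⟨(m : ℕ) + 1 + d, hlt⟩
        (aTerm N M L q m) (aTerm N M L q m) hstep
      simp only [Fin.val_mk] at hs
      rw [ih (by omega)] at hs
      have : Qsum N M q ((m : ℕ) + 1 + (d + 1)) (aTerm N M L q m)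
          = Qsum N M q ((m : ℕ) + 1 + d + 1) (aTerm N M L q m) := by norm_num [Nat.add_assoc]
      rw [this]
      refine mul_left_cancel₀ hN ?_
      rw [hs, pow_succ]
      field_simp
  -- Conditional-expectation step at level m.
  have condstep : ∀ σ : Fin M → Fin N,
      (∀ k l : Fin M, (k : ℕ) < (m : ℕ) → (l : ℕ) < (m : ℕ) → σ k = σ l → k = l) →
      ∑ i : Fin N, (if ∀ k : Fin M, (k : ℕ) < (m : ℕ) → σ k ≠ i
        then q m σ i * aTerm N M L q m (Function.update σ m i) else 0) = C := by
    intro σ hinj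
    set S : ℝ := ∑ t : Fin M, if (t : ℕ) < (m : ℕ) then L (σ t) else 0 with hSdef
    have hterm : ∀ i : Fin N, (∀ k : Fin M, (k : ℕ) < (m : ℕ) → σ k ≠ i) →
        q m σ i * aTerm N M L q m (Function.update σ m i)
          = L i / N + q m σ i * ((1 / (N : ℝ)) * S) := by
      intro i hfresh
      have hup : ∀ k : Fin M, (k : ℕ) < (m : ℕ) → Function.update σ m i k = σ k :=
        fun k hk => Function.update_of_ne (ne_of_lt (show k < m from hk)) _ _
      have hqq : q m (Function.update σ m i) = q m σ := hdep m _ _ hup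
      have hq : 0 < q m σ i := hpos m σ i hfresh
      unfold aTerm
      rw [Function.update_self, hqq]
      have hSS : (∑ t : Fin M, if (t : ℕ) < (m : ℕ)
          then L (Function.update σ m i t) else 0) = S := by
        rw [hSdef]
        refine Finset.sum_congr rfl fun t _ => ?_
        by_cases ht : (t : ℕ) < (m : ℕ)
        · rw [if_pos ht, if_pos ht, hup t ht]
        · rw [if_neg ht, if_neg ht]
      rw [hSS, mul_add]
      congr 1
      field_simp
    have hsplit : ∑ i : Fin N, (if ∀ k : Fin M, (k : ℕ) < (m : ℕ) → σ k ≠ i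
        then q m σ i * aTerm N M L q m (Function.update σ m i) else 0)
        = (∑ i : Fin N, (if ∀ k : Fin M, (k : ℕ) < (m : ℕ) → σ k ≠ i
            then L i / N else 0))
          + (∑ i : Fin N, (if ∀ k : Fin M, (k : ℕ) < (m : ℕ) → σ k ≠ i
              then q m σ i else 0)) * ((1 / (N : ℝ)) * S) := by
      rw [Finset.sum_mul, ← Finset.sum_add_distrib]
      refine Finset.sum_congr rfl fun i _ => ?_
      by_cases hfresh : ∀ k : Fin M, (k : ℕ) < (m : ℕ) → σ k ≠ i
      · rw [if_pos hfresh, if_pos hfresh, if_pos hfresh, hterm i hfresh]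
      · rw [if_neg hfresh, if_neg hfresh, if_neg hfresh]
        ring
    rw [hsplit, PURE.sum_fresh q hzero hsum m σ, one_mul]
    -- Now identify S with the sum of L over the non-fresh indices.
    have himage : Finset.image σ (univ.filter (fun t : Fin M => (t : ℕ) < (m : ℕ)))
        = univ.filter (fun i : Fin N =>
            ¬ ∀ k : Fin M, (k : ℕ) < (m : ℕ) → σ k ≠ i) := by
      ext i
      simp only [Finset.mem_image, Finset.mem_filter, Finset.mem_univ, true_and]
      push_neg
      constructor
      · rintro ⟨t, ht, rfl⟩; exact ⟨t, ht, rfl⟩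
      · rintro ⟨t, ht, h⟩; exact ⟨t, ht, h⟩
    have hS2 : S = ∑ i : Fin N,
        (if ¬ ∀ k : Fin M, (k : ℕ) < (m : ℕ) → σ k ≠ i then L i else 0) := by
      rw [hSdef, ← Finset.sum_filter, ← Finset.sum_filter, ← himage,
        Finset.sum_image]
      intro x hx y hy hxy
      exact hinj x y (Finset.mem_filter.mp hx).2 (Finset.mem_filter.mp hy).2 hxy
    have hLsplit : (∑ i : Fin N, (if ∀ k : Fin M, (k : ℕ) < (m : ℕ) → σ k ≠ i
          then L i else 0)) + S = ∑ n : Fin N, L n := by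
      rw [hS2, ← Finset.sum_add_distrib]
      refine Finset.sum_congr rfl fun i _ => ?_
      by_cases hfresh : ∀ k : Fin M, (k : ℕ) < (m : ℕ) → σ k ≠ i
      · rw [if_pos hfresh, if_neg (not_not_intro hfresh), add_zero]
      · rw [if_neg hfresh, if_pos hfresh, zero_add]
    have hdivsum : (∑ i : Fin N, (if ∀ k : Fin M, (k : ℕ) < (m : ℕ) → σ k ≠ i
          then L i / N else 0))
        = (1 / (N : ℝ)) * ∑ i : Fin N, (if ∀ k : Fin M, (k : ℕ) < (m : ℕ) → σ k ≠ i
            then L i else 0) := by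
      rw [Finset.mul_sum]
      refine Finset.sum_congr rfl fun i _ => ?_
      by_cases hfresh : ∀ k : Fin M, (k : ℕ) < (m : ℕ) → σ k ≠ i
      · rw [if_pos hfresh, if_pos hfresh]; ring
      · rw [if_neg hfresh, if_neg hfresh, mul_zero]
    rw [hdivsum, hC, ← hLsplit]
    ring
  -- Level m+1 via the conditional step.
  have hs2 := PURE.Qsum_succ q hdep m (aTerm N M L q m) (fun _ => C) condstep
  -- Constant functional at level m.
  have h3 : Qsum N M q (m : ℕ) (fun _ => C) = C * (N : ℝ) ^ (M - (m : ℕ)) := by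
    have hone := PURE.Qsum_one q hdep hzero hsum hN (m : ℕ) (le_of_lt m.isLt)
    rw [Qsum] at hone ⊢
    rw [← hone, Finset.mul_sum]
    refine Finset.sum_congr rfl fun σ _ => ?_
    by_cases hinj : ∀ k l : Fin M, (k : ℕ) < (m : ℕ) → (l : ℕ) < (m : ℕ) → σ k = σ l → k = l
    · rw [if_pos hinj, if_pos hinj]; ring
    · rw [if_neg hinj, if_neg hinj, mul_zero]
  -- Assemble.
  have hMeq : (m : ℕ) + 1 + (M - ((m : ℕ) + 1)) = M := by
    have := m.isLt; omega
  have h1 := tail (M - ((m : ℕ) + 1)) (by omega)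
  rw [hMeq] at h1
  rw [h0, h1]
  rw [h3] at hs2
  have h4 : Qsum N M q ((m : ℕ) + 1) (aTerm N M L q m)
      = C * (N : ℝ) ^ (M - ((m : ℕ) + 1)) := by
    have hMm : M - (m : ℕ) = (M - ((m : ℕ) + 1)) + 1 := by
      have := m.isLt; omega
    refine mul_left_cancel₀ hN ?_
    rw [hs2, hMm, pow_succ]
    ring
  rw [h4]
  rw [one_div, inv_pow, mul_comm C, ← mul_assoc,
    inv_mul_cancel₀ (pow_ne_zero _ hN), one_mul]
end

section
/- In the sequential sampling-without-replacement setting (indices i_1,...,i_M from {1,...,N} with conditional proposals q_m supported on unsampled indices, fixed losses L), define R_PURE = (1/M)∑_{m=1}^M a_m where a_m = L(i_m)/(N·q_m(i_m)) + (1/N)∑_{t=1}^{m-1} L(i_t). Then E[R_PURE] = (1/N)∑_{n=1}^N L(n). -/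
namespace PUREaux

lemma snoc_inj_iff {n : ℕ} {α : Type*} {ρ : Fin n → α} {x : α} :
    Function.Injective (Fin.snoc ρ x : Fin (n+1) → α) ↔
      Function.Injective ρ ∧ x ∉ Set.range ρ := by
  constructor
  · intro h
    refine ⟨fun i j hij => ?_, ?_⟩
    · have := @h i.castSucc j.castSucc (by rwa [Fin.snoc_castSucc, Fin.snoc_castSucc])
      exact Fin.castSucc_inj.mp this
    · rintro ⟨i, rfl⟩
      have := @h i.castSucc (Fin.last n) (by rw [Fin.snoc_castSucc, Fin.snoc_last])
      exact absurd this (Fin.castSucc_lt_last i).ne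
  · rintro ⟨hinj, hx⟩ i j hij
    rcases Fin.eq_castSucc_or_eq_last i with ⟨i', rfl⟩ | rfl <;>
      rcases Fin.eq_castSucc_or_eq_last j with ⟨j', rfl⟩ | rfl
    · rw [Fin.snoc_castSucc, Fin.snoc_castSucc] at hij
      exact congrArg _ (hinj hij)
    · rw [Fin.snoc_castSucc, Fin.snoc_last] at hij
      exact absurd ⟨i', hij⟩ hx
    · rw [Fin.snoc_castSucc, Fin.snoc_last] at hij
      exact absurd ⟨j', hij.symm⟩ hx
    · rfl

variable {N M : ℕ} (L : Fin N → ℝ) (q : Fin M → (Fin M → Fin N) → Fin N → ℝ)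

/-- Extend a partial trajectory by junk. -/
def ext (hN : 0 < N) {k : ℕ} (τ : Fin k → Fin N) : Fin M → Fin N :=
  fun j => if h : (j : ℕ) < k then τ ⟨j, h⟩ else ⟨0, hN⟩

lemma ext_snoc (hN : 0 < N) {k : ℕ} (ρ : Fin k → Fin N) (x : Fin N)
    (j : Fin M) (hj : (j : ℕ) < k) :
    ext (M := M) hN (Fin.snoc ρ x) j = ext hN ρ j := by
  have hj1 : (j : ℕ) < k + 1 := Nat.lt_succ_of_lt hj
  simp only [ext, dif_pos hj, dif_pos hj1]
  have h2 : (⟨(j : ℕ), hj1⟩ : Fin (k+1)) = Fin.castSucc ⟨j, hj⟩ := rfl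
  rw [h2, Fin.snoc_castSucc]

lemma ext_snoc_self (hN : 0 < N) {k : ℕ} (ρ : Fin k → Fin N) (x : Fin N)
    (j : Fin M) (hj : (j : ℕ) = k) :
    ext (M := M) hN (Fin.snoc ρ x) j = x := by
  have hj1 : (j : ℕ) < k + 1 := by omega
  simp only [ext, dif_pos hj1]
  have h2 : (⟨(j : ℕ), hj1⟩ : Fin (k+1)) = Fin.last k := by
    ext; simpa using hj
  rw [h2, Fin.snoc_last]

lemma ext_apply_lt (hN : 0 < N) {k : ℕ} (τ : Fin k → Fin N) (j : Fin M)
    (hj : (j : ℕ) < k) : ext (M := M) hN τ j = τ ⟨j, hj⟩ := dif_pos hj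

/-- Partial expectation over the first `k` coordinates. -/
noncomputable def S (hN : 0 < N) (k : ℕ) (hk : k ≤ M)
    (f : (Fin k → Fin N) → ℝ) : ℝ :=
  ∑ τ : Fin k → Fin N, if Function.Injective τ then
    (∏ j : Fin k, q (Fin.castLE hk j) (ext hN τ) (τ j)) * f τ else 0

lemma q_ext_snoc (hdep : ∀ (m : Fin M) (σ σ' : Fin M → Fin N),
      (∀ k : Fin M, (k : ℕ) < (m : ℕ) → σ k = σ' k) → q m σ = q m σ') (hN : 0 < N) {k : ℕ} (ρ : Fin k → Fin N) (x : Fin N)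
    (m : Fin M) (hm : (m : ℕ) ≤ k) :
    q m (ext hN (Fin.snoc ρ x)) = q m (ext hN ρ) :=
  hdep m _ _ fun j hj => ext_snoc hN ρ x j (lt_of_lt_of_le hj hm)

lemma q_mem_zero (hzero : ∀ (m : Fin M) (σ : Fin M → Fin N) (i : Fin N),
      (∃ k : Fin M, (k : ℕ) < (m : ℕ) ∧ σ k = i) → q m σ i = 0) (hN : 0 < N) {k : ℕ} (hk : k ≤ M) (ρ : Fin k → Fin N)
    (m : Fin M) (hm : (m : ℕ) = k) (x : Fin N) (hx : x ∈ Set.range ρ) :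
    q m (ext hN ρ) x = 0 := by
  obtain ⟨t, rfl⟩ := hx
  refine hzero m _ _ ⟨Fin.castLE hk t, by simp [Fin.coe_castLE, hm, t.isLt], ?_⟩
  exact ext_apply_lt hN ρ (Fin.castLE hk t) t.isLt

/-- The key single-step marginalization. -/
lemma S_succ (hdep : ∀ (m : Fin M) (σ σ' : Fin M → Fin N),
      (∀ k : Fin M, (k : ℕ) < (m : ℕ) → σ k = σ' k) → q m σ = q m σ')
    (hzero : ∀ (m : Fin M) (σ : Fin M → Fin N) (i : Fin N),
      (∃ k : Fin M, (k : ℕ) < (m : ℕ) ∧ σ k = i) → q m σ i = 0) (hN : 0 < N) {k : ℕ} (hk : k + 1 ≤ M) (hk' : k ≤ M)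
    (f : (Fin (k+1) → Fin N) → ℝ) :
    S q hN (k+1) hk f = S q hN k hk' (fun ρ =>
      ∑ x : Fin N, q ⟨k, hk⟩ (ext hN ρ) x * f (Fin.snoc ρ x)) := by
  have main : ∀ (F : (Fin (k+1) → Fin N) → ℝ),
      ∑ τ, F τ = ∑ x : Fin N, ∑ ρ : Fin k → Fin N, F (Fin.snoc ρ x) := by
    intro F
    rw [← Equiv.sum_comp (Fin.snocEquiv (fun _ => Fin N)) F, Fintype.sum_prod_type]
    exact Finset.sum_congr rfl fun x _ => Finset.sum_congr rfl fun ρ _ => rfl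
  unfold S
  rw [main, Finset.sum_comm]
  refine Finset.sum_congr rfl fun ρ _ => ?_
  by_cases hρ : Function.Injective ρ
  · rw [if_pos hρ, Finset.mul_sum]
    refine Finset.sum_congr rfl fun x _ => ?_
    by_cases hx : x ∈ Set.range ρ
    · rw [if_neg (fun h => ((snoc_inj_iff.mp h).2 hx)),
        q_mem_zero q hzero hN hk' ρ ⟨k, hk⟩ rfl x hx]
      ring
    · rw [if_pos (snoc_inj_iff.mpr ⟨hρ, hx⟩)]
      have hprod : (∏ j : Fin (k+1), q (Fin.castLE hk j) (ext hN (Fin.snoc ρ x)) ((Fin.snoc ρ x : Fin (k+1) → Fin N) j))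
          = (∏ j : Fin k, q (Fin.castLE hk' j) (ext hN ρ) (ρ j)) * q ⟨k, hk⟩ (ext hN ρ) x := by
        rw [Fin.prod_univ_castSucc]
        congr 1
        · refine Finset.prod_congr rfl fun j _ => ?_
          rw [Fin.snoc_castSucc]
          have h1 : Fin.castLE hk j.castSucc = Fin.castLE hk' j := rfl
          rw [h1, q_ext_snoc q hdep hN ρ x _ (le_of_lt j.isLt)]
        · rw [Fin.snoc_last]
          have h1 : Fin.castLE hk (Fin.last k) = (⟨k, hk⟩ : Fin M) := rfl
          rw [h1, q_ext_snoc q hdep hN ρ x _ le_rfl]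
      rw [hprod]; ring
  · rw [if_neg hρ]
    exact Finset.sum_eq_zero fun x _ => if_neg (fun h => hρ (snoc_inj_iff.mp h).1)

lemma S_const (hdep : ∀ (m : Fin M) (σ σ' : Fin M → Fin N),
      (∀ k : Fin M, (k : ℕ) < (m : ℕ) → σ k = σ' k) → q m σ = q m σ')
    (hzero : ∀ (m : Fin M) (σ : Fin M → Fin N) (i : Fin N),
      (∃ k : Fin M, (k : ℕ) < (m : ℕ) ∧ σ k = i) → q m σ i = 0)
    (hsum : ∀ (m : Fin M) (σ : Fin M → Fin N), ∑ i : Fin N, q m σ i = 1) (hN : 0 < N) (c : ℝ) :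
    ∀ (k : ℕ) (hk : k ≤ M), S q hN k hk (fun _ => c) = c := by
  intro k
  induction k with
  | zero =>
    intro hk
    have hinj : ∀ τ : Fin 0 → Fin N, Function.Injective τ :=
      fun τ => Function.injective_of_subsingleton τ
    simp [S, hinj]
  | succ k ih =>
    intro hk
    rw [S_succ q hdep hzero hN hk (Nat.le_of_succ_le hk)]
    have h1 : (fun ρ : Fin k → Fin N => ∑ x, q ⟨k, hk⟩ (ext hN ρ) x * c)
        = fun _ => c := by
      funext ρ; rw [← Finset.sum_mul, hsum, one_mul]
    rw [h1, ih (Nat.le_of_succ_le hk)]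

lemma sum_trunc (hN : 0 < N) {k : ℕ} (hk : k ≤ M) (τ : Fin k → Fin N) :
    (∑ t : Fin M, if (t : ℕ) < k then L (ext (M := M) hN τ t) else 0)
      = ∑ t : Fin k, L (τ t) := by
  set g : ℕ → ℝ := fun i => if h : i < k then L (τ ⟨i, h⟩) else 0 with hg
  have h1 : ∀ t : Fin M, (if (t : ℕ) < k then L (ext (M := M) hN τ t) else 0) = g (t : ℕ) := by
    intro t
    by_cases h : (t : ℕ) < k
    · rw [if_pos h]; simp only [hg]; rw [dif_pos h, ext_apply_lt hN τ t h]
    · rw [if_neg h]; simp only [hg]; rw [dif_neg h]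
  have h2 : ∀ t : Fin k, L (τ t) = g (t : ℕ) := by
    intro t; simp only [hg]; rw [dif_pos t.isLt]
  calc (∑ t : Fin M, if (t : ℕ) < k then L (ext (M := M) hN τ t) else 0)
      = ∑ t : Fin M, g (t : ℕ) := Finset.sum_congr rfl fun t _ => h1 t
    _ = ∑ i ∈ Finset.range M, g i := Fin.sum_univ_eq_sum_range g M
    _ = ∑ i ∈ Finset.range k, g i := by
        refine (Finset.sum_subset (Finset.range_subset_range.2 hk) fun i _ hik => ?_).symm
        exact dif_neg fun h => hik (Finset.mem_range.mpr h)
    _ = ∑ t : Fin k, g (t : ℕ) := (Fin.sum_univ_eq_sum_range g k).symm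
    _ = ∑ t : Fin k, L (τ t) := Finset.sum_congr rfl fun t _ => (h2 t).symm

lemma aTerm_congr (hdep : ∀ (m : Fin M) (σ σ' : Fin M → Fin N),
      (∀ k : Fin M, (k : ℕ) < (m : ℕ) → σ k = σ' k) → q m σ = q m σ')
    (m : Fin M) (σ σ' : Fin M → Fin N)
    (h : ∀ j : Fin M, (j : ℕ) < (m : ℕ) + 1 → σ j = σ' j) :
    aTerm N M L q m σ = aTerm N M L q m σ' := by
  have hq : q m σ = q m σ' := hdep m σ σ' fun j hj => h j (Nat.lt_succ_of_lt hj)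
  have hm : σ m = σ' m := h m (Nat.lt_succ_self _)
  unfold aTerm
  rw [hq, hm]
  congr 2
  refine Finset.sum_congr rfl fun t _ => ?_
  by_cases ht : (t : ℕ) < (m : ℕ)
  · rw [if_pos ht, if_pos ht, h t (Nat.lt_succ_of_lt ht)]
  · rw [if_neg ht, if_neg ht]

lemma S_aTerm (hdep : ∀ (m : Fin M) (σ σ' : Fin M → Fin N),
      (∀ k : Fin M, (k : ℕ) < (m : ℕ) → σ k = σ' k) → q m σ = q m σ')
    (hpos : ∀ (m : Fin M) (σ : Fin M → Fin N) (i : Fin N),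
      (∀ k : Fin M, (k : ℕ) < (m : ℕ) → σ k ≠ i) → 0 < q m σ i)
    (hzero : ∀ (m : Fin M) (σ : Fin M → Fin N) (i : Fin N),
      (∃ k : Fin M, (k : ℕ) < (m : ℕ) ∧ σ k = i) → q m σ i = 0)
    (hsum : ∀ (m : Fin M) (σ : Fin M → Fin N), ∑ i : Fin N, q m σ i = 1)
    (hN : 0 < N) (m : Fin M) :
    ∀ (k : ℕ), (m : ℕ) < k → ∀ (hk : k ≤ M),
      S q hN k hk (fun τ => aTerm N M L q m (ext hN τ))
        = (1 / (N : ℝ)) * ∑ n : Fin N, L n := by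
  intro k
  induction k with
  | zero => intro h; exact absurd h (Nat.not_lt_zero _)
  | succ k ih =>
    intro hmk hk
    have hk' : k ≤ M := Nat.le_of_succ_le hk
    rw [S_succ q hdep hzero hN hk hk']
    rcases Nat.lt_or_ge (m : ℕ) k with hlt | hge
    · -- history strictly shorter than k : aTerm does not depend on coordinate k
      have heq : (fun ρ : Fin k → Fin N =>
            ∑ x : Fin N, q ⟨k, hk⟩ (ext hN ρ) x * aTerm N M L q m (ext hN (Fin.snoc ρ x)))
          = fun ρ => aTerm N M L q m (ext hN ρ) := by
        funext ρ
        have ha : ∀ x : Fin N,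
            aTerm N M L q m (ext hN (Fin.snoc ρ x)) = aTerm N M L q m (ext hN ρ) := fun x =>
          aTerm_congr L q hdep m _ _ fun j hj => ext_snoc hN ρ x j (by omega)
        calc ∑ x : Fin N, q ⟨k, hk⟩ (ext hN ρ) x * aTerm N M L q m (ext hN (Fin.snoc ρ x))
            = ∑ x : Fin N, q ⟨k, hk⟩ (ext hN ρ) x * aTerm N M L q m (ext hN ρ) :=
              Finset.sum_congr rfl fun x _ => by rw [ha x]
          _ = (∑ x : Fin N, q ⟨k, hk⟩ (ext hN ρ) x) * aTerm N M L q m (ext hN ρ) :=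
              (Finset.sum_mul _ _ _).symm
          _ = aTerm N M L q m (ext hN ρ) := by rw [hsum, one_mul]
      rw [heq]
      exact ih hlt hk'
    · -- the `m`-th draw happens now
      have hmk2 : (m : ℕ) = k := by omega
      have hqm : (⟨k, hk⟩ : Fin M) = m := by ext; exact hmk2.symm
      rw [← S_const q hdep hzero hsum hN ((1 / (N : ℝ)) * ∑ n : Fin N, L n) k hk']
      unfold S
      refine Finset.sum_congr rfl fun ρ _ => ?_
      by_cases hρ : Function.Injective ρ
      · rw [if_pos hρ, if_pos hρ]
        congr 1
        show ∑ x : Fin N, q ⟨k, hk⟩ (ext hN ρ) x * aTerm N M L q m (ext hN (Fin.snoc ρ x))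
          = (1 / (N : ℝ)) * ∑ n : Fin N, L n
        rw [hqm]
        -- evaluate `aTerm` on the extended trajectory
        have haT : ∀ x : Fin N, aTerm N M L q m (ext hN (Fin.snoc ρ x))
            = L x / ((N : ℝ) * q m (ext hN ρ) x)
              + (1 / (N : ℝ)) * ∑ t : Fin k, L (ρ t) := by
          intro x
          unfold aTerm
          have hσm : ext (M := M) hN (Fin.snoc ρ x) m = x := ext_snoc_self hN ρ x m hmk2
          have hq : q m (ext hN (Fin.snoc ρ x)) = q m (ext hN ρ) :=
            q_ext_snoc q hdep hN ρ x m (le_of_eq hmk2)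
          rw [hσm, hq]
          congr 2
          have hterm : ∀ t : Fin M,
              (if (t : ℕ) < (m : ℕ) then L (ext hN (Fin.snoc ρ x) t) else 0)
              = (if (t : ℕ) < k then L (ext (M := M) hN ρ t) else 0) := by
            intro t
            by_cases ht : (t : ℕ) < k
            · rw [if_pos (by omega), if_pos ht, ext_snoc hN ρ x t ht]
            · rw [if_neg (by omega), if_neg ht]
          rw [Finset.sum_congr rfl fun t _ => hterm t, sum_trunc L hN hk' ρ]
        rw [Finset.sum_congr rfl fun x _ => by rw [haT x]]
        -- now compute the conditional expectation
        set Q : Fin N → ℝ := q m (ext hN ρ) with hQ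
        set c2 : ℝ := (1 / (N : ℝ)) * ∑ t : Fin k, L (ρ t) with hc2
        have hNz : (N : ℝ) ≠ 0 := Nat.cast_ne_zero.mpr hN.ne'
        have hQ0 : ∀ x ∈ Finset.image ρ Finset.univ, Q x = 0 := by
          intro x hx
          obtain ⟨t, _, rfl⟩ := Finset.mem_image.mp hx
          exact q_mem_zero q hzero hN hk' ρ m hmk2 _ ⟨t, rfl⟩
        have hQpos : ∀ x ∉ Finset.image ρ Finset.univ, 0 < Q x := by
          intro x hx
          refine hpos m _ x fun t ht hcon => hx ?_
          have ht' : (t : ℕ) < k := by omega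
          rw [ext_apply_lt hN ρ t ht'] at hcon
          exact Finset.mem_image.mpr ⟨⟨t, ht'⟩, Finset.mem_univ _, hcon⟩
        calc ∑ x : Fin N, Q x * (L x / ((N : ℝ) * Q x) + c2)
            = ∑ x : Fin N, (Q x * (L x / ((N : ℝ) * Q x)) + Q x * c2) := by
              refine Finset.sum_congr rfl fun x _ => mul_add _ _ _
          _ = (∑ x : Fin N, Q x * (L x / ((N : ℝ) * Q x))) + (∑ x : Fin N, Q x) * c2 := by
              rw [Finset.sum_add_distrib, Finset.sum_mul]
          _ = (∑ x : Fin N, if x ∈ Finset.image ρ Finset.univ then 0 else L x / (N : ℝ))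
              + (1 : ℝ) * c2 := by
              rw [hQ, hsum]
              congr 1
              refine Finset.sum_congr rfl fun x _ => ?_
              by_cases hx : x ∈ Finset.image ρ Finset.univ
              · rw [if_pos hx, ← hQ, hQ0 x hx, zero_mul]
              · rw [if_neg hx, ← hQ]
                have h5 : Q x ≠ 0 := (hQpos x hx).ne'
                field_simp
          _ = (∑ x : Fin N, if x ∈ Finset.image ρ Finset.univ then 0 else L x / (N : ℝ))
              + ∑ x : Fin N, (if x ∈ Finset.image ρ Finset.univ then L x / (N : ℝ) else 0) := by
              rw [one_mul, hc2]
              congr 1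
              rw [Finset.sum_ite_mem, Finset.univ_inter,
                Finset.sum_image (fun a _ b _ h => hρ h), Finset.mul_sum]
              exact Finset.sum_congr rfl fun t _ => (one_div_mul_eq_div _ _)
          _ = ∑ x : Fin N, L x / (N : ℝ) := by
              rw [← Finset.sum_add_distrib]
              refine Finset.sum_congr rfl fun x _ => ?_
              by_cases hx : x ∈ Finset.image ρ Finset.univ
              · rw [if_pos hx, if_pos hx, zero_add]
              · rw [if_neg hx, if_neg hx, add_zero]
          _ = (1 / (N : ℝ)) * ∑ n : Fin N, L n := by
              rw [Finset.mul_sum]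
              exact Finset.sum_congr rfl fun x _ => (one_div_mul_eq_div _ _).symm
      · rw [if_neg hρ, if_neg hρ]

lemma expec_eq_S (hN : 0 < N) (f : (Fin M → Fin N) → ℝ) :
    expec N M q f = S q hN M le_rfl f := by
  unfold expec S prob
  refine Finset.sum_congr rfl fun σ _ => ?_
  have hext : ext (M := M) hN σ = σ := funext fun j => by
    rw [ext_apply_lt hN σ j j.isLt]
  rw [hext]
  have hcast : ∀ j : Fin M, Fin.castLE (le_refl M) j = j := fun j => rfl
  simp only [hcast]

end PUREaux

/-- The PURE estimator `R_PURE = (1/M)∑_m a_m` is an unbiased estimator of the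
pool risk: `E[R_PURE] = (1/N)∑_n L(n)`. -/
theorem pure_unbiased (N M : ℕ) (hM : 0 < M) (hMN : M ≤ N)
    (L : Fin N → ℝ) (q : Fin M → (Fin M → Fin N) → Fin N → ℝ)
    (hdep : ∀ (m : Fin M) (σ σ' : Fin M → Fin N),
      (∀ k : Fin M, (k : ℕ) < (m : ℕ) → σ k = σ' k) → q m σ = q m σ')
    (hpos : ∀ (m : Fin M) (σ : Fin M → Fin N) (i : Fin N),
      (∀ k : Fin M, (k : ℕ) < (m : ℕ) → σ k ≠ i) → 0 < q m σ i)
    (hzero : ∀ (m : Fin M) (σ : Fin M → Fin N) (i : Fin N),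
      (∃ k : Fin M, (k : ℕ) < (m : ℕ) ∧ σ k = i) → q m σ i = 0)
    (hsum : ∀ (m : Fin M) (σ : Fin M → Fin N), ∑ i : Fin N, q m σ i = 1) :
    expec N M q (fun σ => (1 / (M : ℝ)) * ∑ m : Fin M, aTerm N M L q m σ)
      = (1 / (N : ℝ)) * ∑ n : Fin N, L n := by
  have hN : 0 < N := lt_of_lt_of_le hM hMN
  rw [PUREaux.expec_eq_S q hN]
  have hlin : PUREaux.S q hN M le_rfl
        (fun σ => (1 / (M : ℝ)) * ∑ m : Fin M, aTerm N M L q m σ)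
      = (1 / (M : ℝ)) * ∑ m : Fin M,
          PUREaux.S q hN M le_rfl (fun σ => aTerm N M L q m σ) := by
    unfold PUREaux.S
    calc ∑ σ : Fin M → Fin N, (if Function.Injective σ then
            (∏ j : Fin M, q (Fin.castLE le_rfl j) (PUREaux.ext hN σ) (σ j)) *
              ((1 / (M : ℝ)) * ∑ m : Fin M, aTerm N M L q m σ) else 0)
        = ∑ σ : Fin M → Fin N, ∑ m : Fin M, (1 / (M : ℝ)) *
            (if Function.Injective σ then
              (∏ j : Fin M, q (Fin.castLE le_rfl j) (PUREaux.ext hN σ) (σ j)) *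
                aTerm N M L q m σ else 0) := by
          refine Finset.sum_congr rfl fun σ _ => ?_
          split_ifs with h
          · rw [Finset.mul_sum, Finset.mul_sum]
            exact Finset.sum_congr rfl fun m _ => by ring
          · simp
      _ = ∑ m : Fin M, ∑ σ : Fin M → Fin N, (1 / (M : ℝ)) *
            (if Function.Injective σ then
              (∏ j : Fin M, q (Fin.castLE le_rfl j) (PUREaux.ext hN σ) (σ j)) *
                aTerm N M L q m σ else 0) := Finset.sum_comm
      _ = (1 / (M : ℝ)) * ∑ m : Fin M, ∑ σ : Fin M → Fin N,
            (if Function.Injective σ then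
              (∏ j : Fin M, q (Fin.castLE le_rfl j) (PUREaux.ext hN σ) (σ j)) *
                aTerm N M L q m σ else 0) := by
          rw [Finset.mul_sum]
          exact Finset.sum_congr rfl fun m _ => (Finset.mul_sum _ _ _).symm
  rw [hlin]
  have hm : ∀ m : Fin M, PUREaux.S q hN M le_rfl (fun σ => aTerm N M L q m σ)
      = (1 / (N : ℝ)) * ∑ n : Fin N, L n := by
    intro m
    have h1 := PUREaux.S_aTerm L q hdep hpos hzero hsum hN m M m.isLt le_rfl
    have h2 : (fun τ : Fin M → Fin N => aTerm N M L q m (PUREaux.ext hN τ))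
        = fun τ => aTerm N M L q m τ := by
      funext τ
      congr 1
      funext j
      exact PUREaux.ext_apply_lt hN τ j j.isLt
    rw [h2] at h1
    exact h1
  have hsumS : (∑ m : Fin M, PUREaux.S q hN M le_rfl (fun σ => aTerm N M L q m σ))
      = (M : ℝ) * ((1 / (N : ℝ)) * ∑ n : Fin N, L n) := by
    rw [Finset.sum_congr rfl fun m _ => hm m, Finset.sum_const, Finset.card_univ,
      Fintype.card_fin, nsmul_eq_mul]
  rw [hsumS]
  have hMz : (M : ℝ) ≠ 0 := Nat.cast_ne_zero.mpr hM.ne'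
  field_simp
end

section
/- In the sequential sampling-without-replacement setting with fixed losses L on pool {1,...,N}, the PURE estimator terms satisfy: for k < m, E[(a_m - R̂)(a_k - R̂)] = 0, where R̂ = (1/N)∑_{n=1}^N L(n) and a_m = L(i_m)/(N·q_m(i_m)) + (1/N)∑_{t=1}^{m-1} L(i_t). -/
/-!
Condition on the history `σ 0, …, σ (m-1)`. Its probability and `a_k` (`k < m`) are then fixed,
and since `q_m(σ, ·)` vanishes exactly on the indices already drawn,
`E[w_m L(i_m) | history] = R̂ - (1/N) ∑_{t<m} L(σ t)`, that is `E[a_m | history] = R̂`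
(a history that repeats an index has probability zero). Summing out the coordinate `r` of a
trajectory is the discrete tower property: when `H` and `q_r` do not depend on `σ r`,
`N · ∑_σ H σ q_r σ (σ r) = ∑_σ H σ ∑_i q_r σ i`. At `r = m` this vanishes, and for `r > m`
the draw integrates out because `∑_i q_r σ i = 1`.
-/

open Finset Function

section SumUpdate

variable {ι α R : Type*}

lemma DependsOn.apply_update [DecidableEq ι] {β : Type*} {f : (ι → α) → β} {s : Set ι}
    {r : ι} (hf : DependsOn f s) (hr : r ∉ s) (σ : ι → α) (a : α) :
    f (Function.update σ r a) = f σ :=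
  hf fun _ hi => Function.update_of_ne (ne_of_mem_of_not_mem hi hr) _ _

lemma DependsOn.mul {β : Type*} [Mul β] {f g : (ι → α) → β} {s : Set ι}
    (hf : DependsOn f s) (hg : DependsOn g s) : DependsOn (fun σ => f σ * g σ) s :=
  fun _ _ h => congrArg₂ (· * ·) (hf h) (hg h)

lemma dependsOn_comp_update [DecidableEq ι] {β : Type*} (f : (ι → α) → β) (r : ι) (a : α) :
    DependsOn (fun σ => f (update σ r a)) {r}ᶜ := fun σ σ' h => by
  refine congrArg f (funext fun j => ?_)
  rcases eq_or_ne j r with rfl | hj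
  · simp
  · simp [hj, h j hj]

variable [Fintype ι] [DecidableEq ι] [Fintype α]

lemma card_smul_sum_eq_sum_sum_update [AddCommMonoid R] (r : ι) (G : (ι → α) → R) :
    Fintype.card α • ∑ σ, G σ = ∑ σ, ∑ a, G (update σ r a) := by
  -- `(σ, a) ↦ (update σ r a, σ r)` is an involution of `(ι → α) × α`
  let e : Equiv.Perm ((ι → α) × α) :=
    Involutive.toPerm (fun p => (update p.1 r p.2, p.1 r)) fun p => by simp
  calc Fintype.card α • ∑ σ, G σ = ∑ p : (ι → α) × α, G p.1 := by
        simp [Fintype.sum_prod_type, sum_const, smul_sum]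
    _ = ∑ p : (ι → α) × α, G (e p).1 := (Equiv.sum_comp e fun p => G p.1).symm
    _ = ∑ σ, ∑ a, G (update σ r a) := Fintype.sum_prod_type _

lemma sum_mul_apply_eq_zero_of_sum_mul_sum [CommSemiring R] [IsAddTorsionFree R]
    {H : (ι → α) → R} {φ : (ι → α) → α → R} (r : ι)
    (hH : DependsOn H {r}ᶜ) (hφ : DependsOn φ {r}ᶜ) (h : ∑ σ, H σ * ∑ a, φ σ a = 0) :
    ∑ σ, H σ * φ σ (σ r) = 0 := by
  cases isEmpty_or_nonempty α with
  | inl _ =>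
    have : IsEmpty (ι → α) := ⟨fun σ => isEmptyElim (σ r)⟩
    simp
  | inr _ =>
    have hr : r ∉ ({r}ᶜ : Set ι) := by simp
    refine (smul_eq_zero.mp ?_).resolve_left (Fintype.card_ne_zero (α := α))
    simpa [card_smul_sum_eq_sum_sum_update r, hH.apply_update hr, hφ.apply_update hr,
      mul_sum] using h

end SumUpdate

section PureEstimator

variable {N M : ℕ} {L : Fin N → ℝ} {q : Fin M → (Fin M → Fin N) → Fin N → ℝ}

noncomputable def prefixProb (q : Fin M → (Fin M → Fin N) → Fin N → ℝ) (r : ℕ)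
    (σ : Fin M → Fin N) : ℝ :=
  ∏ j ∈ univ.filter fun j : Fin M => (j : ℕ) < r, q j σ (σ j)

lemma prefixProb_succ (r : ℕ) (hr : r < M) (σ : Fin M → Fin N) :
    prefixProb q (r + 1) σ = prefixProb q r σ * q ⟨r, hr⟩ σ (σ ⟨r, hr⟩) := by
  have hfilter : univ.filter (fun j : Fin M => (j : ℕ) < r + 1)
      = insert ⟨r, hr⟩ (univ.filter fun j : Fin M => (j : ℕ) < r) := by
    ext j
    simp only [mem_filter, mem_univ, true_and, mem_insert, Fin.ext_iff]
    omega
  rw [prefixProb, prefixProb, hfilter, prod_insert (by simp), mul_comm]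

lemma prefixProb_eq_prob (σ : Fin M → Fin N) : prefixProb q M σ = prob N M q σ := by
  simp [prefixProb, prob]

lemma dependsOn_prefixProb (hdep : ∀ m, DependsOn (q m) (Set.Iio m)) (r : ℕ) :
    DependsOn (prefixProb q r) {j | (j : ℕ) < r} := fun σ σ' h =>
  prod_congr rfl fun j hj => by
    have hjr : (j : ℕ) < r := (mem_filter.mp hj).2
    rw [hdep j fun t ht => h t (ht.trans hjr), h j hjr]

lemma prefixProb_eq_zero_of_not_injOn
    (hzero : ∀ m σ i, (∃ k : Fin M, k < m ∧ σ k = i) → q m σ i = 0) {r : ℕ}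
    {σ : Fin M → Fin N} (hσ : ¬ Set.InjOn σ {j | (j : ℕ) < r}) : prefixProb q r σ = 0 := by
  simp only [Set.InjOn, not_forall] at hσ
  obtain ⟨a, ha, b, hb, hab, hne⟩ := hσ
  rcases lt_or_gt_of_ne hne with h | h
  · exact prod_eq_zero (by simpa using hb) (hzero b σ (σ b) ⟨a, h, hab⟩)
  · exact prod_eq_zero (by simpa using ha) (hzero a σ (σ a) ⟨b, h, hab.symm⟩)

lemma expec_eq_sum_prob_mul
    (hzero : ∀ m σ i, (∃ k : Fin M, k < m ∧ σ k = i) → q m σ i = 0)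
    (f : (Fin M → Fin N) → ℝ) : expec N M q f = ∑ σ, prob N M q σ * f σ := by
  refine sum_congr rfl fun σ _ => ite_eq_left_iff.mpr fun hσ => ?_
  rw [← prefixProb_eq_prob, prefixProb_eq_zero_of_not_injOn hzero, zero_mul]
  exact fun hinj => hσ fun a b h => hinj a.isLt b.isLt h

lemma dependsOn_aTerm (hdep : ∀ m, DependsOn (q m) (Set.Iio m)) (m : Fin M) :
    DependsOn (aTerm N M L q m) (Set.Iic m) := fun σ σ' h => by
  have hpast : ∀ t : Fin M, (if (t : ℕ) < m then L (σ t) else 0)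
      = if (t : ℕ) < m then L (σ' t) else 0 := fun t => by
    split_ifs with ht
    · rw [h t (Fin.le_of_lt ht)]
    · rfl
  rw [aTerm, aTerm, hdep m fun t ht => h t (Fin.le_of_lt ht), h m (Set.mem_Iic.mpr le_rfl),
    sum_congr rfl fun t _ => hpast t]

lemma aTerm_update_self (hdep : ∀ m, DependsOn (q m) (Set.Iio m)) (m : Fin M)
    (σ : Fin M → Fin N) (i : Fin N) :
    aTerm N M L q m (update σ m i)
      = L i / (N * q m σ i) + 1 / N * ∑ t : Fin M, if (t : ℕ) < m then L (σ t) else 0 := by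
  have hpast : ∀ t : Fin M, (if (t : ℕ) < m then L (update σ m i t) else 0)
      = if (t : ℕ) < m then L (σ t) else 0 := fun t => by
    split_ifs with ht
    · rw [update_of_ne (Fin.ne_of_lt ht)]
    · rfl
  simp only [aTerm, (hdep m).apply_update Set.self_notMem_Iio, update_self, hpast]

lemma sum_mul_div_mul_self_of_injOn
    (hpos : ∀ m σ i, (∀ k : Fin M, k < m → σ k ≠ i) → 0 < q m σ i)
    (hzero : ∀ m σ i, (∃ k : Fin M, k < m ∧ σ k = i) → q m σ i = 0)
    {m : Fin M} {σ : Fin M → Fin N} (hσ : Set.InjOn σ {t | (t : ℕ) < m}) :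
    ∑ i, q m σ i * (L i / (N * q m σ i))
      = (∑ n, L n - ∑ t : Fin M, if (t : ℕ) < m then L (σ t) else 0) / N := by
  set past := (univ.filter fun t : Fin M => (t : ℕ) < m).image σ
  have hterm : ∀ i, q m σ i * (L i / (N * q m σ i)) = if i ∈ pastᶜ then L i / N else 0 := by
    intro i
    split_ifs with hi
    · have hqi : q m σ i ≠ 0 := (hpos m σ i fun t ht hti =>
        mem_compl.mp hi (mem_image.mpr ⟨t, by simpa using ht, hti⟩)).ne'
      field_simp
    · obtain ⟨t, ht, rfl⟩ := mem_image.mp (notMem_compl.mp hi)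
      rw [hzero m σ _ ⟨t, (mem_filter.mp ht).2, rfl⟩, zero_mul]
  have hpast : ∑ i ∈ past, L i = ∑ t : Fin M, if (t : ℕ) < m then L (σ t) else 0 := by
    rw [sum_image (s := univ.filter fun t : Fin M => (t : ℕ) < m)
      (hσ.mono fun t ht => (mem_filter.mp ht).2), sum_filter]
  rw [sum_congr rfl fun i _ => hterm i, sum_ite_mem, univ_inter, ← hpast,
    ← sum_compl_add_sum past, add_sub_cancel_right, sum_div]

lemma sum_mul_aTerm_update_of_injOn (hdep : ∀ m, DependsOn (q m) (Set.Iio m))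
    (hpos : ∀ m σ i, (∀ k : Fin M, k < m → σ k ≠ i) → 0 < q m σ i)
    (hzero : ∀ m σ i, (∃ k : Fin M, k < m ∧ σ k = i) → q m σ i = 0)
    (hsum : ∀ m σ, ∑ i, q m σ i = 1)
    {m : Fin M} {σ : Fin M → Fin N} (hσ : Set.InjOn σ {t | (t : ℕ) < m}) :
    ∑ i, q m σ i * aTerm N M L q m (update σ m i) = 1 / N * ∑ n, L n := by
  simp only [aTerm_update_self hdep, mul_add, sum_add_distrib, ← sum_mul, hsum,
    sum_mul_div_mul_self_of_injOn hpos hzero hσ]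
  ring

lemma sum_prefixProb_succ_mul_eq_zero (hdep : ∀ m, DependsOn (q m) (Set.Iio m))
    (hsum : ∀ m σ, ∑ i, q m σ i = 1) {F : (Fin M → Fin N) → ℝ} {r : ℕ} (hr : r < M)
    (hF : DependsOn F {j | (j : ℕ) < r}) (h : ∑ σ, prefixProb q r σ * F σ = 0) :
    ∑ σ, prefixProb q (r + 1) σ * F σ = 0 := by
  have hr' : {j : Fin M | (j : ℕ) < r} ⊆ {⟨r, hr⟩}ᶜ := fun j hj hjr =>
    (Nat.ne_of_lt hj) (Fin.val_eq_of_eq hjr)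
  simp only [prefixProb_succ r hr, mul_right_comm _ (q _ _ _)]
  exact sum_mul_apply_eq_zero_of_sum_mul_sum ⟨r, hr⟩
    (((dependsOn_prefixProb hdep r).mul hF).mono hr')
    ((hdep ⟨r, hr⟩).mono hr') (by simpa [hsum] using h)

lemma sum_prefixProb_succ_mul_aTerm_sub_mul_eq_zero (hdep : ∀ m, DependsOn (q m) (Set.Iio m))
    (hpos : ∀ m σ i, (∀ k : Fin M, k < m → σ k ≠ i) → 0 < q m σ i)
    (hzero : ∀ m σ i, (∃ k : Fin M, k < m ∧ σ k = i) → q m σ i = 0)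
    (hsum : ∀ m σ, ∑ i, q m σ i = 1) (m : Fin M) {G : (Fin M → Fin N) → ℝ}
    (hG : DependsOn G (Set.Iio m)) :
    ∑ σ, prefixProb q (m + 1) σ * ((aTerm N M L q m σ - 1 / N * ∑ n, L n) * G σ) = 0 := by
  set R := 1 / (N : ℝ) * ∑ n, L n
  have hm : Set.Iio m ⊆ {m}ᶜ := fun j hj hjm => (ne_of_lt hj) hjm
  have hfactor : ∀ σ, prefixProb q (m + 1) σ * ((aTerm N M L q m σ - R) * G σ)
      = prefixProb q m σ * G σ * (q m σ (σ m) * (aTerm N M L q m (update σ m (σ m)) - R)) :=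
    fun σ => by rw [prefixProb_succ _ m.isLt, update_eq_self]; ring
  simp only [hfactor]
  refine sum_mul_apply_eq_zero_of_sum_mul_sum
    (φ := fun σ i => q m σ i * (aTerm N M L q m (update σ m i) - R)) m
    (((dependsOn_prefixProb hdep m).mul hG).mono hm)
    (fun σ σ' h => funext fun i => congrArg₂ (fun a b => a * (b - R))
      (congrFun ((hdep m).mono hm h) i) (dependsOn_comp_update (aTerm N M L q m) m i h))
    (sum_eq_zero fun σ _ => ?_)
  by_cases hσ : Set.InjOn σ {t | (t : ℕ) < m}
  · simp [mul_sub, sum_sub_distrib, sum_mul_aTerm_update_of_injOn hdep hpos hzero hsum hσ,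
      ← sum_mul, hsum, R]
  · simp [prefixProb_eq_zero_of_not_injOn hzero hσ]

end PureEstimator

theorem pure_terms_uncorrelated_general (N M : ℕ)
    (L : Fin N → ℝ) (q : Fin M → (Fin M → Fin N) → Fin N → ℝ)
    (hdep : ∀ (m : Fin M) (σ σ' : Fin M → Fin N),
      (∀ k : Fin M, (k : ℕ) < (m : ℕ) → σ k = σ' k) → q m σ = q m σ')
    (hpos : ∀ (m : Fin M) (σ : Fin M → Fin N) (i : Fin N),
      (∀ k : Fin M, (k : ℕ) < (m : ℕ) → σ k ≠ i) → 0 < q m σ i)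
    (hzero : ∀ (m : Fin M) (σ : Fin M → Fin N) (i : Fin N),
      (∃ k : Fin M, (k : ℕ) < (m : ℕ) ∧ σ k = i) → q m σ i = 0)
    (hsum : ∀ (m : Fin M) (σ : Fin M → Fin N), ∑ i : Fin N, q m σ i = 1) :
    ∀ k m : Fin M, (k : ℕ) < (m : ℕ) →
      expec N M q (fun σ =>
        (aTerm N M L q m σ - (1 / (N : ℝ)) * ∑ n : Fin N, L n) *
        (aTerm N M L q k σ - (1 / (N : ℝ)) * ∑ n : Fin N, L n)) = 0 := by
  intro k m hkm
  have hqdep : ∀ m, DependsOn (q m) (Set.Iio m) := fun m _ _ h => hdep m _ _ h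
  have hk : DependsOn (aTerm N M L q k) (Set.Iio m) :=
    (dependsOn_aTerm hqdep k).mono fun _ ht => lt_of_le_of_lt ht hkm
  set R := 1 / (N : ℝ) * ∑ n, L n
  set F := fun σ => (aTerm N M L q m σ - R) * (aTerm N M L q k σ - R)
  have hF : DependsOn F (Set.Iic m) := fun σ σ' h => by
    simp only [F, dependsOn_aTerm hqdep m h, hk fun t ht => h t (Fin.le_of_lt ht)]
  have htail : ∀ r : ℕ, m + 1 ≤ r → r ≤ M → ∑ σ, prefixProb q r σ * F σ = 0 := by
    intro r hr
    induction r, hr using Nat.le_induction with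
    | base =>
      exact fun _ => sum_prefixProb_succ_mul_aTerm_sub_mul_eq_zero hqdep hpos hzero hsum m
        fun σ σ' h => by rw [hk h]
    | succ r hmr ih =>
      exact fun (hrM : r < M) => sum_prefixProb_succ_mul_eq_zero hqdep hsum hrM
        (hF.mono fun j (hj : j ≤ m) => (Fin.le_def.mp hj).trans_lt hmr) (ih hrM.le)
  rw [expec_eq_sum_prob_mul hzero]
  simpa only [prefixProb_eq_prob] using htail M m.isLt le_rfl

/-- Distinct PURE terms are uncorrelated: for `k < m`,
`E[(a_m - R̂)(a_k - R̂)] = 0` where `R̂ = (1/N)∑_n L(n)`. -/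
theorem pure_terms_uncorrelated (N M : ℕ) (hM : 0 < M) (hMN : M ≤ N)
    (L : Fin N → ℝ) (q : Fin M → (Fin M → Fin N) → Fin N → ℝ)
    (hdep : ∀ (m : Fin M) (σ σ' : Fin M → Fin N),
      (∀ k : Fin M, (k : ℕ) < (m : ℕ) → σ k = σ' k) → q m σ = q m σ')
    (hpos : ∀ (m : Fin M) (σ : Fin M → Fin N) (i : Fin N),
      (∀ k : Fin M, (k : ℕ) < (m : ℕ) → σ k ≠ i) → 0 < q m σ i)
    (hzero : ∀ (m : Fin M) (σ : Fin M → Fin N) (i : Fin N),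
      (∃ k : Fin M, (k : ℕ) < (m : ℕ) ∧ σ k = i) → q m σ i = 0)
    (hsum : ∀ (m : Fin M) (σ : Fin M → Fin N), ∑ i : Fin N, q m σ i = 1) :
    ∀ k m : Fin M, (k : ℕ) < (m : ℕ) →
      expec N M q (fun σ =>
        (aTerm N M L q m σ - (1 / (N : ℝ)) * ∑ n : Fin N, L n) *
        (aTerm N M L q k σ - (1 / (N : ℝ)) * ∑ n : Fin N, L n)) = 0 :=
  pure_terms_uncorrelated_general N M L q hdep hpos hzero hsum
end

section
/- In the sequential sampling-without-replacement setting with fixed losses L on pool {1,...,N}, Var[R_PURE] = (1/M²)∑_{m=1}^M E[Var[w_m·L(i_m) | i_{1:m-1}]], where R_PURE = (1/M)∑ a_m, a_m = w_m·L(i_m) + (1/N)∑_{t<m} L(i_t), and w_m = 1/(N·q_m(i_m)). -/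
/-!
Conditionally on the history `i_{1:m-1}`, the weight `w_m` turns the draw of `i_m` into the
uniform average of `L` over the indices not yet acquired, and the history term of `a_m` adds back
the acquired ones; so every `a_m` has conditional mean `(1/N)∑ L`. Hence the `a_m` are pairwise
uncorrelated and `Var[a_m] = E[Var[w_m·L(i_m) | i_{1:m-1}]]`. Conditioning is implemented by
marginalising the trailing indices one at a time: a functional of the first `t` indices has the
same expectation whether the later indices are drawn by `q` or uniformly.
-/

open Finset Function

section Prefix

variable {M : ℕ} {α β : Type*}

def DependsOnPrefix (t : ℕ) (f : (Fin M → α) → β) : Prop :=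
  ∀ σ σ' : Fin M → α, (∀ k : Fin M, (k : ℕ) < t → σ k = σ' k) → f σ = f σ'

namespace DependsOnPrefix

lemma mono {t u : ℕ} {f : (Fin M → α) → β} (hf : DependsOnPrefix t f) (htu : t ≤ u) :
    DependsOnPrefix u f :=
  fun σ σ' h => hf σ σ' fun k hk => h k (hk.trans_le htu)

lemma update_eq {m : Fin M} {f : (Fin M → α) → β} (hf : DependsOnPrefix m f)
    (σ : Fin M → α) (i : α) : f (update σ m i) = f σ :=
  hf _ _ fun _ hk => update_of_ne (Fin.lt_def.2 hk).ne _ _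

lemma apply_self {m : Fin M} {G : (Fin M → α) → α → β} (hG : DependsOnPrefix m G) :
    DependsOnPrefix (m + 1) (fun σ => G σ (σ m)) := fun σ σ' h => by
  dsimp only
  rw [hG.mono (Nat.le_succ _) σ σ' h, h m (Nat.lt_succ_self _)]

end DependsOnPrefix

end Prefix

lemma Fintype.sum_sum_update {ι α : Type*} [Fintype ι] [DecidableEq ι] [Fintype α]
    (j : ι) (h : (ι → α) → ℝ) :
    ∑ σ, ∑ i, h (update σ j i) = Fintype.card α * ∑ σ, h σ := by
  have swap : Involutive fun p : (ι → α) × α => (update p.1 j p.2, p.1 j) := fun p => by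
    simp
  rw [← Fintype.sum_prod_type' (f := fun σ i => h (update σ j i)),
    Fintype.sum_equiv swap.toPerm (fun p => h (update p.1 j p.2)) (fun p => h p.1) fun _ => rfl,
    Fintype.sum_prod_type, sum_comm]
  simp [mul_sum]

section Marginal

variable {M : ℕ} {α : Type*} (q : Fin M → (Fin M → α) → α → ℝ)

noncomputable def prefixWeight (t : ℕ) (σ : Fin M → α) : ℝ :=
  ∏ k ∈ univ.filter (fun k : Fin M => (k : ℕ) < t), q k σ (σ k)

lemma prefixWeight_succ (m : Fin M) (σ : Fin M → α) :
    prefixWeight q (m + 1) σ = prefixWeight q m σ * q m σ (σ m) := by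
  have hfilter : univ.filter (fun k : Fin M => (k : ℕ) < m + 1)
      = insert m (univ.filter fun k : Fin M => (k : ℕ) < m) := by
    ext k
    simp only [mem_filter, mem_univ, true_and, mem_insert, Fin.ext_iff]
    omega
  rw [prefixWeight, hfilter, prod_insert (by simp), mul_comm, prefixWeight]

variable {q}

lemma dependsOnPrefix_prefixWeight (hdep : ∀ m : Fin M, DependsOnPrefix m (q m)) (t : ℕ) :
    DependsOnPrefix t (prefixWeight q t) := fun σ σ' h =>
  prod_congr rfl fun k hk => by
    have hkt : (k : ℕ) < t := (mem_filter.1 hk).2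
    rw [h k hkt, hdep k σ σ' fun j hj => h j (hj.trans hkt)]

variable [Fintype α]

/-- `card α ^ M` times the expectation of `f` when the first `t` indices are drawn by `q` and the
remaining ones independently and uniformly. -/
noncomputable def partialMass (q : Fin M → (Fin M → α) → α → ℝ) (t : ℕ)
    (f : (Fin M → α) → ℝ) : ℝ :=
  (Fintype.card α : ℝ) ^ t * ∑ σ, prefixWeight q t σ * f σ

lemma partialMass_succ (hdep : ∀ m : Fin M, DependsOnPrefix m (q m)) (m : Fin M)
    (f : (Fin M → α) → ℝ) :
    partialMass q (m + 1) f = partialMass q m (fun σ => ∑ i, q m σ i * f (update σ m i)) := by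
  have hupdate : ∀ σ i, prefixWeight q (m + 1) (update σ m i) * f (update σ m i)
      = prefixWeight q m σ * (q m σ i * f (update σ m i)) := fun σ i => by
    rw [prefixWeight_succ, (dependsOnPrefix_prefixWeight hdep m).update_eq,
      (hdep m).update_eq, update_self, mul_assoc]
  calc partialMass q (m + 1) f
      = (Fintype.card α : ℝ) ^ (m : ℕ)
          * ∑ σ, ∑ i, prefixWeight q (m + 1) (update σ m i) * f (update σ m i) := by
        rw [partialMass, pow_succ, mul_assoc, ← Fintype.sum_sum_update]
    _ = _ := by simp only [hupdate, ← mul_sum, partialMass]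

lemma partialMass_eq_of_dependsOnPrefix (hdep : ∀ m : Fin M, DependsOnPrefix m (q m))
    (hsum : ∀ m σ, ∑ i, q m σ i = 1) {t u : ℕ} (htu : t ≤ u) (hu : u ≤ M)
    {f : (Fin M → α) → ℝ} (hf : DependsOnPrefix t f) :
    partialMass q u f = partialMass q t f := by
  induction u, htu using Nat.le_induction with
  | base => rfl
  | succ u htu ih =>
    let m : Fin M := ⟨u, hu⟩
    have hf_update : ∀ σ i, f (update σ m i) = f σ := (hf.mono htu).update_eq (m := m)
    calc partialMass q (u + 1) f = partialMass q m f := by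
          rw [partialMass_succ hdep m]
          simp only [hf_update, ← sum_mul, hsum, one_mul]
      _ = partialMass q t f := ih (Nat.le_of_succ_le hu)

lemma partialMass_tower (hdep : ∀ m : Fin M, DependsOnPrefix m (q m))
    (hsum : ∀ m σ, ∑ i, q m σ i = 1)
    (m : Fin M) {G : (Fin M → α) → α → ℝ} (hG : DependsOnPrefix m G) :
    partialMass q M (fun σ => G σ (σ m)) = partialMass q M (fun σ => ∑ i, q m σ i * G σ i) := by
  have hcond : DependsOnPrefix m (fun σ => ∑ i, q m σ i * G σ i) := fun σ σ' h => by
    dsimp only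
    rw [hdep m σ σ' h, hG σ σ' h]
  calc partialMass q M (fun σ => G σ (σ m))
      = partialMass q (m + 1) (fun σ => G σ (σ m)) :=
        partialMass_eq_of_dependsOnPrefix hdep hsum m.isLt le_rfl hG.apply_self
    _ = partialMass q m (fun σ => ∑ i, q m σ i * G σ i) := by
        simp only [partialMass_succ hdep, hG.update_eq, update_self]
    _ = _ := (partialMass_eq_of_dependsOnPrefix hdep hsum m.isLt.le le_rfl hcond).symm

end Marginal

lemma LinearMap.map_sq_sub_sq_const_mul_sum {Ω ι : Type*} (E : (Ω → ℝ) →ₗ[ℝ] ℝ) (c : ℝ)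
    (s : Finset ι) (X : ι → Ω → ℝ) :
    E (fun ω => (c * ∑ i ∈ s, X i ω) ^ 2) - E (fun ω => c * ∑ i ∈ s, X i ω) ^ 2
      = c ^ 2 * ∑ i ∈ s, ∑ j ∈ s, (E (fun ω => X i ω * X j ω) - E (X i) * E (X j)) := by
  have hsq : (fun ω => (c * ∑ i ∈ s, X i ω) ^ 2)
      = ∑ i ∈ s, ∑ j ∈ s, c ^ 2 • fun ω => X i ω * X j ω := by
    ext ω
    simp only [Finset.sum_apply, Pi.smul_apply, smul_eq_mul, ← mul_sum]
    rw [mul_pow, sq (∑ i ∈ s, X i ω), sum_mul_sum]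
    simp only [mul_sum]
  have hlin : (fun ω => c * ∑ i ∈ s, X i ω) = ∑ i ∈ s, c • X i := by
    ext ω
    simp only [Finset.sum_apply, Pi.smul_apply, smul_eq_mul, mul_sum]
  rw [hsq, hlin]
  simp only [map_sum, map_smul, smul_eq_mul, ← mul_sum]
  rw [mul_pow, sq (∑ i ∈ s, E (X i)), sum_mul_sum, ← mul_sub, ← sum_sub_distrib]
  simp only [sum_sub_distrib]

section Sampling

variable {N M : ℕ} {q : Fin M → (Fin M → Fin N) → Fin N → ℝ}
  (hdep : ∀ m : Fin M, DependsOnPrefix m (q m))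
  (hzero : ∀ (m : Fin M) σ i, (∃ k : Fin M, (k : ℕ) < m ∧ σ k = i) → q m σ i = 0)
  (hsum : ∀ m σ, ∑ i, q m σ i = 1)

include hzero in
lemma prob_eq_zero_of_not_injective {σ : Fin M → Fin N} (hσ : ¬ Injective σ) :
    prob N M q σ = 0 := by
  obtain ⟨k, k', hkk', hne⟩ : ∃ k k', σ k = σ k' ∧ k ≠ k' := by
    simpa [Injective] using hσ
  wlog hlt : k < k' generalizing k k'
  · exact this k' k hkk'.symm hne.symm (hne.lt_or_gt.resolve_left hlt)
  exact prod_eq_zero (mem_univ k') (hzero k' σ _ ⟨k, hlt, hkk'⟩)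

lemma prob_eq_prefixWeight : prob N M q = prefixWeight q M := by
  ext σ
  rw [prob, prefixWeight, filter_true_of_mem fun k _ => k.isLt]

include hzero in
lemma pow_mul_expec (f : (Fin M → Fin N) → ℝ) :
    (N : ℝ) ^ M * expec N M q f = partialMass q M f := by
  rw [partialMass, Fintype.card_fin, expec]
  congr 1
  refine sum_congr rfl fun σ _ => ?_
  split_ifs with hσ
  · rw [prob_eq_prefixWeight]
  · rw [← prob_eq_prefixWeight, prob_eq_zero_of_not_injective hzero hσ, zero_mul]

include hdep hzero hsum in
lemma expec_tower (hN : N ≠ 0) (m : Fin M) {G : (Fin M → Fin N) → Fin N → ℝ}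
    (hG : DependsOnPrefix m G) :
    expec N M q (fun σ => G σ (σ m)) = expec N M q (fun σ => ∑ i, q m σ i * G σ i) := by
  refine mul_left_cancel₀ (pow_ne_zero M (Nat.cast_ne_zero.2 hN)) ?_
  rw [pow_mul_expec hzero, pow_mul_expec hzero, partialMass_tower hdep hsum m hG]

include hdep hzero hsum in
lemma expec_const (hN : N ≠ 0) (c : ℝ) : expec N M q (fun _ => c) = c := by
  refine mul_left_cancel₀ (pow_ne_zero M (Nat.cast_ne_zero.2 hN)) ?_
  rw [pow_mul_expec hzero, partialMass_eq_of_dependsOnPrefix hdep hsum (Nat.zero_le M) le_rfl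
    fun _ _ _ => rfl]
  simp [partialMass, prefixWeight, mul_comm]

lemma expec_congr {f g : (Fin M → Fin N) → ℝ} (h : ∀ σ, Injective σ → f σ = g σ) :
    expec N M q f = expec N M q g :=
  sum_congr rfl fun σ _ => by split_ifs with hσ <;> simp [h σ, hσ]

noncomputable def expecLinearMap (N M : ℕ) (q : Fin M → (Fin M → Fin N) → Fin N → ℝ) :
    ((Fin M → Fin N) → ℝ) →ₗ[ℝ] ℝ where
  toFun := expec N M q
  map_add' f g := by
    simp only [expec, ← sum_add_distrib]
    refine sum_congr rfl fun σ _ => ?_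
    split_ifs <;> simp [mul_add]
  map_smul' c f := by
    simp only [expec, RingHom.id_apply, smul_eq_mul, mul_sum]
    refine sum_congr rfl fun σ _ => ?_
    split_ifs <;> simp [mul_left_comm]

lemma coe_expecLinearMap (N M : ℕ) (q : Fin M → (Fin M → Fin N) → Fin N → ℝ) :
    ⇑(expecLinearMap N M q) = expec N M q := rfl

end Sampling

section Pure

variable {N M : ℕ} (L : Fin N → ℝ) {q : Fin M → (Fin M → Fin N) → Fin N → ℝ}
  (hdep : ∀ m : Fin M, DependsOnPrefix m (q m))
  (hpos : ∀ (m : Fin M) σ i, (∀ k : Fin M, (k : ℕ) < m → σ k ≠ i) → 0 < q m σ i)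
  (hzero : ∀ (m : Fin M) σ i, (∃ k : Fin M, (k : ℕ) < m ∧ σ k = i) → q m σ i = 0)
  (hsum : ∀ m σ, ∑ i, q m σ i = 1)

noncomputable def aTermAt (N M : ℕ) (L : Fin N → ℝ) (q : Fin M → (Fin M → Fin N) → Fin N → ℝ)
    (m : Fin M) (σ : Fin M → Fin N) (i : Fin N) : ℝ :=
  L i / ((N : ℝ) * q m σ i)
    + (1 / (N : ℝ)) * ∑ t : Fin M, if (t : ℕ) < (m : ℕ) then L (σ t) else 0

lemma aTerm_eq_aTermAt (m : Fin M) :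
    aTerm N M L q m = fun σ => aTermAt N M L q m σ (σ m) := rfl

include hdep in
lemma dependsOnPrefix_aTermAt (m : Fin M) : DependsOnPrefix m (aTermAt N M L q m) :=
  fun σ σ' h => by
    ext i
    rw [aTermAt, aTermAt, hdep m σ σ' h]
    congr 2
    refine sum_congr rfl fun t _ => ?_
    split_ifs with ht
    · rw [h t ht]
    · rfl

include hdep in
lemma dependsOnPrefix_aTerm (m : Fin M) : DependsOnPrefix (m + 1) (aTerm N M L q m) :=
  (dependsOnPrefix_aTermAt L hdep m).apply_self

include hpos hzero in
lemma sum_q_mul_div_add_history {σ : Fin M → Fin N} (hσ : Injective σ) (m : Fin M) :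
    ∑ i, q m σ i * (L i / ((N : ℝ) * q m σ i))
        + (1 / (N : ℝ)) * ∑ t : Fin M, (if (t : ℕ) < (m : ℕ) then L (σ t) else 0)
      = (∑ i, L i) / N := by
  set H := (univ.filter fun t : Fin M => (t : ℕ) < m).image σ
  have hmem : ∀ i, i ∈ H ↔ ∃ k : Fin M, (k : ℕ) < m ∧ σ k = i := fun i => by simp [H]
  have hterm : ∀ i, q m σ i * (L i / ((N : ℝ) * q m σ i))
      = L i / N - if i ∈ H then L i / N else 0 := fun i => by
    split_ifs with hi
    · rw [hzero m σ i ((hmem i).1 hi)]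
      simp
    · have hq : q m σ i ≠ 0 :=
        (hpos m σ i fun k hk hki => hi ((hmem i).2 ⟨k, hk, hki⟩)).ne'
      field_simp
      ring
  have hhistory : ∑ t : Fin M, (if (t : ℕ) < (m : ℕ) then L (σ t) else 0) = ∑ i ∈ H, L i := by
    rw [← sum_filter, sum_image hσ.injOn]
  rw [sum_congr rfl fun i _ => hterm i, sum_sub_distrib, sum_ite_mem, univ_inter, hhistory,
    ← sum_div, ← sum_div]
  ring

include hpos hzero hsum in
lemma sum_q_mul_aTermAt {σ : Fin M → Fin N} (hσ : Injective σ) (m : Fin M) :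
    ∑ i, q m σ i * aTermAt N M L q m σ i = (∑ i, L i) / N := by
  simp only [aTermAt, mul_add, sum_add_distrib, ← sum_mul, hsum, one_mul]
  exact sum_q_mul_div_add_history L hpos hzero hσ m

include hpos hzero hsum in
lemma sum_q_mul_aTermAt_sq {σ : Fin M → Fin N} (hσ : Injective σ) (m : Fin M) :
    ∑ i, q m σ i * aTermAt N M L q m σ i ^ 2 = condVar N M L q m σ + ((∑ i, L i) / N) ^ 2 := by
  set w : Fin N → ℝ := fun i => L i / ((N : ℝ) * q m σ i)
  set c : ℝ := (1 / (N : ℝ)) * ∑ t : Fin M, (if (t : ℕ) < (m : ℕ) then L (σ t) else 0)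
  have hexpand : ∑ i, q m σ i * (w i + c) ^ 2
      = ∑ i, q m σ i * w i ^ 2 + 2 * c * ∑ i, q m σ i * w i + c ^ 2 := by
    have hterm : ∀ i, q m σ i * (w i + c) ^ 2
        = q m σ i * w i ^ 2 + 2 * c * (q m σ i * w i) + c ^ 2 * q m σ i := fun i => by ring
    rw [sum_congr rfl fun i _ => hterm i, sum_add_distrib, sum_add_distrib, ← mul_sum, ← mul_sum,
      hsum, mul_one]
  rw [← sum_q_mul_div_add_history L hpos hzero hσ m]
  change ∑ i, q m σ i * (w i + c) ^ 2 = _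
  rw [hexpand, condVar]
  ring

variable (hN : N ≠ 0)
include hdep hpos hzero hsum hN

lemma expec_aTerm (m : Fin M) : expec N M q (aTerm N M L q m) = (∑ i, L i) / N := by
  rw [aTerm_eq_aTermAt, expec_tower hdep hzero hsum hN m (dependsOnPrefix_aTermAt L hdep m)]
  calc expec N M q (fun σ => ∑ i, q m σ i * aTermAt N M L q m σ i)
      = expec N M q (fun _ => (∑ i, L i) / N) :=
        expec_congr fun _ hσ => sum_q_mul_aTermAt L hpos hzero hsum hσ m
    _ = _ := expec_const hdep hzero hsum hN _

lemma expec_aTerm_mul_self (m : Fin M) :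
    expec N M q (fun σ => aTerm N M L q m σ * aTerm N M L q m σ)
      = expec N M q (condVar N M L q m) + ((∑ i, L i) / N) ^ 2 := by
  have hG : DependsOnPrefix m fun σ i => aTermAt N M L q m σ i ^ 2 := fun σ σ' h => by
    simp only [dependsOnPrefix_aTermAt L hdep m σ σ' h]
  simp only [aTerm_eq_aTermAt, ← sq]
  rw [expec_tower hdep hzero hsum hN m hG]
  calc expec N M q (fun σ => ∑ i, q m σ i * aTermAt N M L q m σ i ^ 2)
      = expec N M q (condVar N M L q m + fun _ => ((∑ i, L i) / N) ^ 2) :=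
        expec_congr fun _ hσ => sum_q_mul_aTermAt_sq L hpos hzero hsum hσ m
    _ = _ := by
        rw [← coe_expecLinearMap, map_add, coe_expecLinearMap, expec_const hdep hzero hsum hN]

lemma expec_aTerm_mul_of_lt {m m' : Fin M} (hlt : m < m') :
    expec N M q (fun σ => aTerm N M L q m σ * aTerm N M L q m' σ) = ((∑ i, L i) / N) ^ 2 := by
  have hG : DependsOnPrefix m' fun σ i => aTerm N M L q m σ * aTermAt N M L q m' σ i :=
    fun σ σ' h => by
      simp only [(dependsOnPrefix_aTerm L hdep m).mono hlt σ σ' h,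
        dependsOnPrefix_aTermAt L hdep m' σ σ' h]
  rw [aTerm_eq_aTermAt L m', expec_tower hdep hzero hsum hN m' hG]
  calc expec N M q (fun σ => ∑ i, q m' σ i * (aTerm N M L q m σ * aTermAt N M L q m' σ i))
      = expec N M q (((∑ i, L i) / N) • aTerm N M L q m) := expec_congr fun σ hσ => by
        simp only [mul_left_comm (q m' σ _), ← mul_sum, sum_q_mul_aTermAt L hpos hzero hsum hσ,
          Pi.smul_apply, smul_eq_mul, mul_comm]
    _ = _ := by
        rw [← coe_expecLinearMap, map_smul, coe_expecLinearMap,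
          expec_aTerm L hdep hpos hzero hsum hN, smul_eq_mul, sq]

lemma expec_aTerm_mul_sub_mul (m m' : Fin M) :
    expec N M q (fun σ => aTerm N M L q m σ * aTerm N M L q m' σ)
        - expec N M q (aTerm N M L q m) * expec N M q (aTerm N M L q m')
      = if m = m' then expec N M q (condVar N M L q m) else 0 := by
  simp only [expec_aTerm L hdep hpos hzero hsum hN]
  rcases lt_trichotomy m m' with hlt | rfl | hgt
  · rw [expec_aTerm_mul_of_lt L hdep hpos hzero hsum hN hlt, if_neg hlt.ne]
    ring
  · rw [expec_aTerm_mul_self L hdep hpos hzero hsum hN, if_pos rfl]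
    ring
  · simp only [mul_comm (aTerm N M L q m _)]
    rw [expec_aTerm_mul_of_lt L hdep hpos hzero hsum hN hgt, if_neg hgt.ne']
    ring

end Pure

/-- Variance decomposition of the PURE estimator for a fixed pool:
`Var[R_PURE] = (1/M²)∑_m E[Var[w_m·L(i_m) | i_{1:m-1}]]`. -/
theorem pure_variance (N M : ℕ) (hM : 0 < M) (hMN : M ≤ N)
    (L : Fin N → ℝ) (q : Fin M → (Fin M → Fin N) → Fin N → ℝ)
    (hdep : ∀ (m : Fin M) (σ σ' : Fin M → Fin N),
      (∀ k : Fin M, (k : ℕ) < (m : ℕ) → σ k = σ' k) → q m σ = q m σ')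
    (hpos : ∀ (m : Fin M) (σ : Fin M → Fin N) (i : Fin N),
      (∀ k : Fin M, (k : ℕ) < (m : ℕ) → σ k ≠ i) → 0 < q m σ i)
    (hzero : ∀ (m : Fin M) (σ : Fin M → Fin N) (i : Fin N),
      (∃ k : Fin M, (k : ℕ) < (m : ℕ) ∧ σ k = i) → q m σ i = 0)
    (hsum : ∀ (m : Fin M) (σ : Fin M → Fin N), ∑ i : Fin N, q m σ i = 1) :
    expec N M q (fun σ => ((1 / (M : ℝ)) * ∑ m : Fin M, aTerm N M L q m σ) ^ 2)
        - (expec N M q (fun σ => (1 / (M : ℝ)) * ∑ m : Fin M, aTerm N M L q m σ)) ^ 2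
      = (1 / (M : ℝ) ^ 2) * ∑ m : Fin M, expec N M q (condVar N M L q m) := by
  have hN : N ≠ 0 := (hM.trans_le hMN).ne'
  rw [← coe_expecLinearMap, LinearMap.map_sq_sub_sq_const_mul_sum, coe_expecLinearMap]
  simp only [expec_aTerm_mul_sub_mul L hdep hpos hzero hsum hN, sum_ite_eq, mem_univ, if_true,
    one_div_pow]
end

section
/- In the sequential sampling-without-replacement setting with fixed nonnegative losses L on pool {1,...,N} (not all zero at any stage), if the proposal at each step is q*_m(i) = L(i)/∑_{n∉i_{1:m-1}} L(n), then the PURE estimator satisfies R_PURE = (1/N)∑_{n=1}^N L(n) almost surely, for every M ≤ N. -/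
/-- Under the optimal proposal `q*_m(i) = L(i)/∑_{n∉i_{1:m-1}} L(n)` (with
nonnegative losses, not all zero at any stage), the PURE estimator equals the
pool risk almost surely (i.e. on every positive-probability injective
trajectory), for every `M ≤ N`. -/
theorem pure_optimal_exact (N M : ℕ) (hM : 0 < M) (hMN : M ≤ N)
    (L : Fin N → ℝ) (hLnn : ∀ n : Fin N, 0 ≤ L n)
    (q : Fin M → (Fin M → Fin N) → Fin N → ℝ)
    (hstage : ∀ (m : Fin M) (σ : Fin M → Fin N), Function.Injective σ →
      0 < ∑ n : Fin N, if ∀ k : Fin M, (k : ℕ) < (m : ℕ) → σ k ≠ n then L n else 0)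
    (hopt : ∀ (m : Fin M) (σ : Fin M → Fin N) (i : Fin N),
      q m σ i = L i /
        ∑ n : Fin N, if ∀ k : Fin M, (k : ℕ) < (m : ℕ) → σ k ≠ n then L n else 0) :
    ∀ σ : Fin M → Fin N, Function.Injective σ → prob N M q σ ≠ 0 →
      (1 / (M : ℝ)) * ∑ m : Fin M, aTerm N M L q m σ
        = (1 / (N : ℝ)) * ∑ n : Fin N, L n := by
  intro σ hinj hprob
  have hMpos : (0:ℝ) < M := by exact_mod_cast hM
  have hNpos : (0:ℝ) < N := by exact_mod_cast lt_of_lt_of_le hM hMN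
  have key : ∀ m : Fin M, aTerm N M L q m σ = (1/(N:ℝ)) * ∑ n, L n := by
    intro m
    set S := ∑ n : Fin N, if ∀ k : Fin M, (k:ℕ) < (m:ℕ) → σ k ≠ n then L n else 0 with hS
    have hSpos : 0 < S := hstage m σ hinj
    have hq := hopt m σ (σ m)
    have hqne : q m σ (σ m) ≠ 0 := by
      intro h0
      exact hprob (Finset.prod_eq_zero (Finset.mem_univ m) h0)
    have hLm : L (σ m) ≠ 0 := by
      intro h; apply hqne; rw [hq, ← hS, h]; simp
    have hist : ∑ t : Fin M, (if (t:ℕ) < (m:ℕ) then L (σ t) else 0)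
        = ∑ n : Fin N, if ¬ (∀ k : Fin M, (k:ℕ) < (m:ℕ) → σ k ≠ n) then L n else 0 := by
      rw [← Finset.sum_filter, ← Finset.sum_filter,
        show (∑ t ∈ Finset.univ.filter (fun t : Fin M => (t:ℕ) < (m:ℕ)), L (σ t))
          = ∑ n ∈ (Finset.univ.filter (fun t : Fin M => (t:ℕ) < (m:ℕ))).image σ, L n
          from (Finset.sum_image (fun a _ b _ h => hinj h)).symm]
      apply Finset.sum_congr _ (fun _ _ => rfl)
      ext n
      simp only [Finset.mem_image, Finset.mem_filter, Finset.mem_univ, true_and]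
      push_neg
      tauto
    have hsplit : S + ∑ t : Fin M, (if (t:ℕ) < (m:ℕ) then L (σ t) else 0) = ∑ n, L n := by
      rw [hist, hS, ← Finset.sum_add_distrib]
      apply Finset.sum_congr rfl
      intro n _
      by_cases h : ∀ k : Fin M, (k:ℕ) < (m:ℕ) → σ k ≠ n
      · rw [if_pos h, if_neg (not_not_intro h), add_zero]
      · rw [if_neg h, if_pos h, zero_add]
    have hterm : L (σ m) / ((N:ℝ) * q m σ (σ m)) = S / N := by
      rw [hq, ← hS]
      field_simp
    unfold aTerm
    rw [hterm, ← hsplit]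
    field_simp
  rw [Finset.sum_congr rfl (fun m _ => key m), Finset.sum_const, Finset.card_univ,
    Fintype.card_fin, nsmul_eq_mul]
  field_simp
end

section
/- In the sequential sampling-without-replacement setting with fixed nonnegative losses L on pool {1,...,N}, under the optimal proposal q*_m(i) = L(i)/∑_{n∉i_{1:m-1}} L(n), the LURE estimator R_LURE = (1/M)∑_{m=1}^M v_m·L(i_m) with v_m = 1 + ((N-M)/(N-m))·(1/((N-m+1)q*_m(i_m)) - 1) equals (1/N)∑_{n=1}^N L(n) almost surely, for every M ≤ N-1. -/
/-- Under the optimal proposal `q*_m(i) = L(i)/∑_{n∉i_{1:m-1}} L(n)` (with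
nonnegative losses, not all zero at any stage), the LURE estimator
`(1/M)∑_m v_m·L(i_m)` with `v_m = 1 + ((N-M)/(N-m))·(1/((N-m+1)q*_m(i_m)) - 1)`
equals the pool risk almost surely, for every `M ≤ N-1`. (Here `m : Fin M` is
zero-based, so the paper's one-based `m` is `m+1`: `N-m+1` becomes `N-↑m` and
`N-m` becomes `N-↑m-1`.) -/
theorem lure_optimal_exact (N M : ℕ) (hM : 0 < M) (hN : 0 < N) (hMN : M ≤ N - 1)
    (L : Fin N → ℝ) (hLnn : ∀ n : Fin N, 0 ≤ L n)
    (q : Fin M → (Fin M → Fin N) → Fin N → ℝ)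
    (hstage : ∀ (m : Fin M) (σ : Fin M → Fin N), Function.Injective σ →
      0 < ∑ n : Fin N, if ∀ k : Fin M, (k : ℕ) < (m : ℕ) → σ k ≠ n then L n else 0)
    (hopt : ∀ (m : Fin M) (σ : Fin M → Fin N) (i : Fin N),
      q m σ i = L i /
        ∑ n : Fin N, if ∀ k : Fin M, (k : ℕ) < (m : ℕ) → σ k ≠ n then L n else 0) :
    ∀ σ : Fin M → Fin N, Function.Injective σ → prob N M q σ ≠ 0 →
      (1 / (M : ℝ)) * ∑ m : Fin M,
          (1 + (((N : ℝ) - (M : ℝ)) / ((N : ℝ) - ((m : ℕ) : ℝ) - 1)) *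
            (1 / (((N : ℝ) - ((m : ℕ) : ℝ)) * q m σ (σ m)) - 1)) * L (σ m)
        = (1 / (N : ℝ)) * ∑ n : Fin N, L n := by
  intro σ hinj hprob
  have hMltN : M < N := by omega
  set T : ℝ := ∑ n : Fin N, L n with hT
  set S : ℕ → ℝ := fun j => ∑ n : Fin N,
      if ∀ k : Fin M, (k : ℕ) < j → σ k ≠ n then L n else 0 with hSdef
  have hS0 : S 0 = T := by simp [hSdef, hT]
  have hSpos : ∀ m : Fin M, 0 < S (m : ℕ) := fun m => hstage m σ hinj
  have hq : ∀ m : Fin M, q m σ (σ m) = L (σ m) / S (m : ℕ) := fun m => hopt m σ (σ m)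
  have hLpos : ∀ m : Fin M, 0 < L (σ m) := by
    intro m
    have h1 : q m σ (σ m) ≠ 0 := by
      intro h
      exact hprob (Finset.prod_eq_zero (Finset.mem_univ m) h)
    rw [hq m] at h1
    have hne : L (σ m) ≠ 0 := fun h => h1 (by simp [h])
    exact lt_of_le_of_ne (hLnn _) (Ne.symm hne)
  have hSsucc : ∀ m : Fin M, S ((m : ℕ) + 1) = S (m : ℕ) - L (σ m) := by
    intro m
    have hpt : ∀ n : Fin N,
        (if ∀ k : Fin M, (k : ℕ) < (m : ℕ) + 1 → σ k ≠ n then L n else 0)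
        = (if ∀ k : Fin M, (k : ℕ) < (m : ℕ) → σ k ≠ n then L n else 0)
          - (if n = σ m then L n else 0) := by
      intro n
      by_cases hn : n = σ m
      · subst hn
        rw [if_pos rfl, if_neg, if_pos]
        · ring
        · intro k hk hkn
          have : k = m := hinj hkn
          subst this
          omega
        · intro h
          exact h m (by omega) rfl
      · rw [if_neg hn, sub_zero]
        refine if_congr ⟨fun h k hk => h k (by omega), fun h k hk => ?_⟩ rfl rfl
        rcases Nat.lt_succ_iff_lt_or_eq.mp hk with h' | h'
        · exact h k h'
        · have : k = m := Fin.ext h'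
          subst this
          exact fun he => hn he.symm
    simp only [hSdef]
    rw [Finset.sum_congr rfl (fun n _ => hpt n), Finset.sum_sub_distrib,
      Finset.sum_ite_eq' Finset.univ (σ m) L]
    simp
  set f : ℕ → ℝ := fun j => S j / ((N : ℝ) - j) with hfdef
  have hkey : ∀ m : Fin M,
      (1 + (((N : ℝ) - (M : ℝ)) / ((N : ℝ) - ((m : ℕ) : ℝ) - 1)) *
        (1 / (((N : ℝ) - ((m : ℕ) : ℝ)) * q m σ (σ m)) - 1)) * L (σ m)
      = ((N : ℝ) - (M : ℝ)) * (f ((m : ℕ) + 1) - f (m : ℕ)) + L (σ m) := by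
    intro m
    have hm1 : (m : ℕ) + 1 < N := by have := m.isLt; omega
    have hc1 : ((m : ℕ) : ℝ) + 1 < (N : ℝ) := by exact_mod_cast hm1
    have hd1 : (0 : ℝ) < (N : ℝ) - ((m : ℕ) : ℝ) - 1 := by linarith
    have hd2 : (0 : ℝ) < (N : ℝ) - ((m : ℕ) : ℝ) := by linarith
    have hSm := hSpos m
    have hLm := hLpos m
    have h1 : ((N : ℝ) - ((m : ℕ) : ℝ) - 1) ≠ 0 := ne_of_gt hd1
    have h2 : ((N : ℝ) - ((m : ℕ) : ℝ)) ≠ 0 := ne_of_gt hd2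
    have h3 : S (m : ℕ) ≠ 0 := ne_of_gt hSm
    have h4 : L (σ m) ≠ 0 := ne_of_gt hLm
    have h5 : ((N : ℝ) - (((m : ℕ) : ℝ) + 1)) ≠ 0 := by
      intro h; apply h1; linarith
    rw [hq m]
    simp only [hfdef, hSsucc m]
    push_cast
    field_simp [h1, h2, h3, h4, h5]
    ring
  rw [Finset.sum_congr rfl (fun m _ => hkey m)]
  rw [Finset.sum_add_distrib, ← Finset.mul_sum]
  have htel1 : ∑ m : Fin M, (f ((m : ℕ) + 1) - f (m : ℕ)) = f M - f 0 := by
    rw [Fin.sum_univ_eq_sum_range (fun j => f (j + 1) - f j) M]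
    exact Finset.sum_range_sub f M
  have htel2 : ∑ m : Fin M, L (σ m) = T - S M := by
    have : ∀ m : Fin M, L (σ m) = S (m : ℕ) - S ((m : ℕ) + 1) := by
      intro m; rw [hSsucc m]; ring
    rw [Finset.sum_congr rfl (fun m _ => this m),
      Fin.sum_univ_eq_sum_range (fun j => S j - S (j + 1)) M,
      Finset.sum_range_sub' S M, hS0]
  rw [htel1, htel2]
  have hf0 : f 0 = T / (N : ℝ) := by simp [hfdef, hS0]
  have hfM : f M = S M / ((N : ℝ) - (M : ℝ)) := by simp [hfdef]
  rw [hf0, hfM]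
  have hNne : (N : ℝ) ≠ 0 := Nat.cast_ne_zero.mpr (by omega)
  have hMne : (M : ℝ) ≠ 0 := Nat.cast_ne_zero.mpr (by omega)
  have hNMne : (N : ℝ) - (M : ℝ) ≠ 0 := by
    have : (M : ℝ) < (N : ℝ) := by exact_mod_cast hMltN
    linarith
  field_simp
  ring
end

section
/- In the sequential sampling-without-replacement setting with fixed losses L, Var[R_LURE] = (1/M²)∑_{m=1}^M c_m² · E[Var[w_m·L(i_m) | i_{1:m-1}]], where R_LURE = (1/M)∑ c_m·a_m with c_m = N(N-M)/((N-m)(N-m+1)), a_m = w_m·L(i_m) + (1/N)∑_{t<m} L(i_t), and w_m = 1/(N·q_m(i_m)). -/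
namespace LureAux

variable {N M : ℕ}

/-- `f` depends only on coordinates `< m`. -/
def DepLT (m : ℕ) (f : (Fin M → Fin N) → ℝ) : Prop :=
  ∀ σ σ' : Fin M → Fin N, (∀ k : Fin M, (k : ℕ) < m → σ k = σ' k) → f σ = f σ'

noncomputable def pUpTo (q : Fin M → (Fin M → Fin N) → Fin N → ℝ) (m : ℕ)
    (σ : Fin M → Fin N) : ℝ :=
  ∏ t : Fin M, if (t : ℕ) < m then q t σ (σ t) else 1

lemma pUpTo_top (q : Fin M → (Fin M → Fin N) → Fin N → ℝ) (σ : Fin M → Fin N) :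
    pUpTo q M σ = prob N M q σ := by
  unfold pUpTo prob
  exact Finset.prod_congr rfl (fun t _ => by simp [t.isLt])

lemma pUpTo_zero (q : Fin M → (Fin M → Fin N) → Fin N → ℝ) (σ : Fin M → Fin N) :
    pUpTo q 0 σ = 1 := by
  simp [pUpTo]

lemma pUpTo_succ (q : Fin M → (Fin M → Fin N) → Fin N → ℝ) (m : ℕ) (hm : m < M)
    (σ : Fin M → Fin N) :
    pUpTo q (m + 1) σ = pUpTo q m σ * q ⟨m, hm⟩ σ (σ ⟨m, hm⟩) := by
  unfold pUpTo
  have : ∀ t : Fin M, (if (t : ℕ) < m + 1 then q t σ (σ t) else 1)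
        = (if (t : ℕ) < m then q t σ (σ t) else 1) *
          (if t = ⟨m, hm⟩ then q t σ (σ t) else 1) := by
      intro t
      rcases lt_trichotomy (t : ℕ) m with h | h | h
      · have ht : t ≠ ⟨m, hm⟩ := by
          intro he; rw [he] at h; simp at h
        simp [h, Nat.lt_succ_of_lt h, ht]
      · have ht : t = ⟨m, hm⟩ := by
          apply Fin.ext; simp [h]
        simp [ht, Nat.lt_irrefl]
      · have h1 : ¬ (t : ℕ) < m + 1 := by omega
        have h2 : ¬ (t : ℕ) < m := by omega
        have ht : t ≠ ⟨m, hm⟩ := by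
          intro he; rw [he] at h; simp at h
        simp [h1, h2, ht]
  rw [Finset.prod_congr rfl (fun t _ => this t), Finset.prod_mul_distrib]
  congr 1
  rw [Finset.prod_ite_eq' Finset.univ (⟨m, hm⟩ : Fin M) (fun t => q t σ (σ t))]
  simp

lemma pUpTo_dep (q : Fin M → (Fin M → Fin N) → Fin N → ℝ)
    (hdep : ∀ (m : Fin M) (σ σ' : Fin M → Fin N),
      (∀ k : Fin M, (k : ℕ) < (m : ℕ) → σ k = σ' k) → q m σ = q m σ')
    (m : ℕ) : DepLT m (pUpTo q m) := by
  intro σ σ' h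
  unfold pUpTo
  refine Finset.prod_congr rfl (fun t _ => ?_)
  by_cases ht : (t : ℕ) < m
  · have hq : q t σ = q t σ' := hdep t σ σ' (fun k hk => h k (hk.trans ht))
    rw [if_pos ht, if_pos ht, hq, h t ht]
  · rw [if_neg ht, if_neg ht]

lemma prob_eq_zero (q : Fin M → (Fin M → Fin N) → Fin N → ℝ)
    (hzero : ∀ (m : Fin M) (σ : Fin M → Fin N) (i : Fin N),
      (∃ k : Fin M, (k : ℕ) < (m : ℕ) ∧ σ k = i) → q m σ i = 0)
    (σ : Fin M → Fin N) (h : ¬ Function.Injective σ) : prob N M q σ = 0 := by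
  rw [Function.not_injective_iff] at h
  obtain ⟨a, b, hab, hne⟩ := h
  rcases Ne.lt_or_gt hne with hlt | hlt
  · exact Finset.prod_eq_zero (Finset.mem_univ b) (hzero b σ (σ b) ⟨a, hlt, hab⟩)
  · exact Finset.prod_eq_zero (Finset.mem_univ a) (hzero a σ (σ a) ⟨b, hlt, hab.symm⟩)

lemma expec_eq_sum (q : Fin M → (Fin M → Fin N) → Fin N → ℝ)
    (hzero : ∀ (m : Fin M) (σ : Fin M → Fin N) (i : Fin N),
      (∃ k : Fin M, (k : ℕ) < (m : ℕ) ∧ σ k = i) → q m σ i = 0)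
    (f : (Fin M → Fin N) → ℝ) :
    expec N M q f = ∑ σ : Fin M → Fin N, prob N M q σ * f σ := by
  unfold expec
  refine Finset.sum_congr rfl (fun σ _ => ?_)
  by_cases h : Function.Injective σ
  · rw [if_pos h]
  · rw [if_neg h, prob_eq_zero q hzero σ h, zero_mul]

lemma sum_update (F : (Fin M → Fin N) → ℝ) (p : Fin M) :
    ∑ σ : Fin M → Fin N, ∑ j : Fin N, F (Function.update σ p j)
      = (N : ℝ) * ∑ σ : Fin M → Fin N, F σ := by
  classical
  set e := Equiv.piSplitAt p (fun _ : Fin M => Fin N) with he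
  have key : ∀ (x : Fin N × ({j : Fin M // j ≠ p} → Fin N)) (j : Fin N),
      Function.update (e.symm x) p j = e.symm (j, x.2) := by
    intro x j
    funext i
    by_cases hi : i = p
    · subst hi
      simp [Function.update, Equiv.piSplitAt, he]
    · simp [Function.update, hi, Equiv.piSplitAt, he]
  have h1 : ∑ σ : Fin M → Fin N, ∑ j : Fin N, F (Function.update σ p j)
      = ∑ x : Fin N × ({j : Fin M // j ≠ p} → Fin N), ∑ j : Fin N, F (e.symm (j, x.2)) := by
    rw [← Equiv.sum_comp e.symm (fun σ => ∑ j : Fin N, F (Function.update σ p j))]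
    exact Finset.sum_congr rfl (fun x _ => Finset.sum_congr rfl (fun j _ => by rw [key]))
  rw [h1, Fintype.sum_prod_type]
  have h2 : ∀ j' : Fin N, ∑ ρ : ({j : Fin M // j ≠ p} → Fin N), ∑ j : Fin N, F (e.symm (j, ρ))
      = ∑ σ : Fin M → Fin N, F σ := by
    intro j'
    rw [Finset.sum_comm]
    exact (Fintype.sum_prod_type
      (fun x : Fin N × ({j : Fin M // j ≠ p} → Fin N) => F (e.symm x))).symm.trans
      (Equiv.sum_comp e.symm F)
  rw [Finset.sum_congr rfl (fun j' _ => h2 j')]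
  simp [mul_comm]


section
variable (q : Fin M → (Fin M → Fin N) → Fin N → ℝ)
variable (hdep : ∀ (m : Fin M) (σ σ' : Fin M → Fin N),
      (∀ k : Fin M, (k : ℕ) < (m : ℕ) → σ k = σ' k) → q m σ = q m σ')
variable (hzero : ∀ (m : Fin M) (σ : Fin M → Fin N) (i : Fin N),
      (∃ k : Fin M, (k : ℕ) < (m : ℕ) ∧ σ k = i) → q m σ i = 0)
variable (hsum : ∀ (m : Fin M) (σ : Fin M → Fin N), ∑ i : Fin N, q m σ i = 1)

include hdep hzero hsum in
lemma mainLemma : ∀ d : ℕ, d ≤ M → ∀ f : (Fin M → Fin N) → ℝ, DepLT (M - d) f →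
    (N : ℝ) ^ d * expec N M q f = ∑ σ : Fin M → Fin N, pUpTo q (M - d) σ * f σ := by
  intro d
  induction d with
  | zero =>
    intro _ f _
    simp only [Nat.sub_zero, pow_zero, one_mul]
    rw [expec_eq_sum q hzero f]
    exact Finset.sum_congr rfl (fun σ _ => by rw [pUpTo_top])
  | succ d ih =>
    intro hd f hf
    have hm : M - (d + 1) < M := by omega
    set m : ℕ := M - (d + 1) with hmdef
    have hms : M - d = m + 1 := by omega
    set p : Fin M := ⟨m, hm⟩ with hp
    have hf' : DepLT (m + 1) f := by
      intro σ σ' h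
      exact hf σ σ' (fun k hk => h k (by omega))
    have ihf := ih (by omega) f (by rw [hms]; exact hf')
    rw [hms] at ihf
    have hupd : ∀ (σ : Fin M → Fin N) (j : Fin N),
        pUpTo q (m + 1) (Function.update σ p j) * f (Function.update σ p j)
          = pUpTo q m σ * q p σ j * f σ := by
      intro σ j
      have hagree : ∀ k : Fin M, (k : ℕ) < m → Function.update σ p j k = σ k := by
        intro k hk
        apply Function.update_of_ne
        intro he; rw [he] at hk; simp [hp] at hk
      have h1 : pUpTo q m (Function.update σ p j) = pUpTo q m σ :=
        pUpTo_dep q hdep m _ _ hagree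
      have h2 : q p (Function.update σ p j) = q p σ := hdep p _ _ (by
        intro k hk; exact hagree k hk)
      have h3 : f (Function.update σ p j) = f σ := hf _ _ hagree
      rw [pUpTo_succ q m hm, h1, h2, h3, Function.update_self]
    have key : (N : ℝ) * ∑ σ : Fin M → Fin N, pUpTo q (m + 1) σ * f σ
        = ∑ σ : Fin M → Fin N, pUpTo q m σ * f σ := by
      rw [← sum_update (fun σ => pUpTo q (m + 1) σ * f σ) p]
      refine Finset.sum_congr rfl (fun σ _ => ?_)
      rw [Finset.sum_congr rfl (fun j (_ : j ∈ Finset.univ) => hupd σ j)]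
      have : ∑ j : Fin N, pUpTo q m σ * q p σ j * f σ
          = pUpTo q m σ * f σ * ∑ j : Fin N, q p σ j := by
        rw [Finset.mul_sum]; exact Finset.sum_congr rfl (fun j _ => by ring)
      rw [this, hsum p σ, mul_one]
    calc (N : ℝ) ^ (d + 1) * expec N M q f
        = (N : ℝ) * ((N : ℝ) ^ d * expec N M q f) := by ring
      _ = ∑ σ : Fin M → Fin N, pUpTo q m σ * f σ := by rw [ihf, key]

include hdep hzero hsum in
lemma mass_one (hN : 0 < N) : expec N M q (fun _ => 1) = 1 := by
  have h := mainLemma q hdep hzero hsum M (le_refl M) (fun _ => 1)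
    (by intro σ σ' _; rfl)
  simp only [Nat.sub_self, mul_one] at h
  have hcard : ∑ σ : Fin M → Fin N, pUpTo q 0 σ = (N : ℝ) ^ M := by
    simp [pUpTo_zero, Finset.card_univ]
  rw [hcard] at h
  have hpow : ((N : ℝ) ^ M) ≠ 0 := by positivity
  have : (N : ℝ) ^ M * expec N M q (fun _ => 1) = (N : ℝ) ^ M * 1 := by
    rw [h, mul_one]
  exact mul_left_cancel₀ hpow this

include hdep hzero hsum in
lemma tower (hN : 0 < N) (p : Fin M) (f : (Fin M → Fin N) → ℝ)
    (hf : DepLT ((p : ℕ) + 1) f) :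
    expec N M q f
      = expec N M q (fun σ => ∑ j : Fin N, q p σ j * f (Function.update σ p j)) := by
  set g : (Fin M → Fin N) → ℝ :=
    fun σ => ∑ j : Fin N, q p σ j * f (Function.update σ p j) with hg
  have hgdep : DepLT (p : ℕ) g := by
    intro σ σ' h
    simp only [hg]
    have hq : q p σ = q p σ' := hdep p σ σ' h
    refine Finset.sum_congr rfl (fun j _ => ?_)
    rw [hq]
    congr 1
    refine hf _ _ (fun k hk => ?_)
    rcases Nat.lt_or_ge (k : ℕ) (p : ℕ) with hlt | hge
    · rw [Function.update_of_ne (by intro he; rw [he] at hlt; omega),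
        Function.update_of_ne (by intro he; rw [he] at hlt; omega)]
      exact h k hlt
    · have : k = p := by apply Fin.ext; omega
      rw [this]; simp
  have hmp : (p : ℕ) < M := p.isLt
  have h1 := mainLemma q hdep hzero hsum (M - (p : ℕ)) (by omega) g
    (by rw [Nat.sub_sub_self (le_of_lt hmp)]; exact hgdep)
  rw [Nat.sub_sub_self (le_of_lt hmp)] at h1
  have h2 := mainLemma q hdep hzero hsum (M - ((p : ℕ) + 1)) (by omega) f
    (by rw [Nat.sub_sub_self hmp]; exact hf)
  rw [Nat.sub_sub_self hmp] at h2
  have hupd : ∀ (σ : Fin M → Fin N) (j : Fin N),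
      pUpTo q ((p : ℕ) + 1) (Function.update σ p j) * f (Function.update σ p j)
        = pUpTo q (p : ℕ) σ * (q p σ j * f (Function.update σ p j)) := by
    intro σ j
    have hagree : ∀ k : Fin M, (k : ℕ) < (p : ℕ) → Function.update σ p j k = σ k := by
      intro k hk
      apply Function.update_of_ne
      intro he; rw [he] at hk; omega
    have h1' : pUpTo q (p : ℕ) (Function.update σ p j) = pUpTo q (p : ℕ) σ :=
      pUpTo_dep q hdep (p : ℕ) _ _ hagree
    have h2' : q p (Function.update σ p j) = q p σ := hdep p _ _ hagree
    have hpp : (⟨(p : ℕ), hmp⟩ : Fin M) = p := by apply Fin.ext; rfl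
    rw [pUpTo_succ q (p : ℕ) hmp, hpp, h1', h2', Function.update_self]
    ring
  have key : (N : ℝ) * ∑ σ : Fin M → Fin N, pUpTo q ((p : ℕ) + 1) σ * f σ
      = ∑ σ : Fin M → Fin N, pUpTo q (p : ℕ) σ * g σ := by
    rw [← sum_update (fun σ => pUpTo q ((p : ℕ) + 1) σ * f σ) p]
    refine Finset.sum_congr rfl (fun σ _ => ?_)
    rw [Finset.sum_congr rfl (fun j (_ : j ∈ Finset.univ) => hupd σ j), hg,
      ← Finset.mul_sum]
  have hNM : ((N : ℝ)) ^ (M - (p : ℕ)) ≠ 0 := by positivity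
  have hMsub : M - (p : ℕ) = (M - ((p : ℕ) + 1)) + 1 := by omega
  have chain : (N : ℝ) ^ (M - (p : ℕ)) * expec N M q g
      = (N : ℝ) ^ (M - (p : ℕ)) * expec N M q f := by
    rw [h1, ← key, hMsub]
    rw [pow_succ]
    rw [mul_comm ((N:ℝ) ^ (M - ((p : ℕ) + 1))) (N : ℝ), mul_assoc, h2]
  exact (mul_left_cancel₀ hNM chain).symm

end

section Lin
variable (q : Fin M → (Fin M → Fin N) → Fin N → ℝ)

lemma expec_congr {f g : (Fin M → Fin N) → ℝ}
    (h : ∀ σ : Fin M → Fin N, Function.Injective σ → f σ = g σ) :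
    expec N M q f = expec N M q g := by
  unfold expec
  refine Finset.sum_congr rfl (fun σ _ => ?_)
  by_cases hσ : Function.Injective σ
  · rw [if_pos hσ, if_pos hσ, h σ hσ]
  · rw [if_neg hσ, if_neg hσ]

lemma expec_zero : expec N M q (fun _ => 0) = 0 := by
  simp [expec]

lemma expec_smul (c : ℝ) (f : (Fin M → Fin N) → ℝ) :
    expec N M q (fun σ => c * f σ) = c * expec N M q f := by
  unfold expec
  rw [Finset.mul_sum]
  refine Finset.sum_congr rfl (fun σ _ => ?_)
  split <;> ring

lemma expec_add (f g : (Fin M → Fin N) → ℝ) :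
    expec N M q (fun σ => f σ + g σ) = expec N M q f + expec N M q g := by
  unfold expec
  rw [← Finset.sum_add_distrib]
  refine Finset.sum_congr rfl (fun σ _ => ?_)
  split <;> ring

lemma expec_sum {ι : Type*} (s : Finset ι) (g : ι → (Fin M → Fin N) → ℝ) :
    expec N M q (fun σ => ∑ m ∈ s, g m σ) = ∑ m ∈ s, expec N M q (g m) := by
  unfold expec
  rw [Finset.sum_comm]
  refine Finset.sum_congr rfl (fun σ _ => ?_)
  split
  · rw [Finset.mul_sum]
  · simp

end Lin

section Prob

variable (L : Fin N → ℝ) (q : Fin M → (Fin M → Fin N) → Fin N → ℝ)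
variable (hdep : ∀ (m : Fin M) (σ σ' : Fin M → Fin N),
      (∀ k : Fin M, (k : ℕ) < (m : ℕ) → σ k = σ' k) → q m σ = q m σ')
variable (hpos : ∀ (m : Fin M) (σ : Fin M → Fin N) (i : Fin N),
      (∀ k : Fin M, (k : ℕ) < (m : ℕ) → σ k ≠ i) → 0 < q m σ i)
variable (hzero : ∀ (m : Fin M) (σ : Fin M → Fin N) (i : Fin N),
      (∃ k : Fin M, (k : ℕ) < (m : ℕ) ∧ σ k = i) → q m σ i = 0)
variable (hsum : ∀ (m : Fin M) (σ : Fin M → Fin N), ∑ i : Fin N, q m σ i = 1)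

include hdep in
lemma aTerm_update (m : Fin M) (σ : Fin M → Fin N) (j : Fin N) :
    aTerm N M L q m (Function.update σ m j)
      = L j / ((N : ℝ) * q m σ j)
        + (1 / (N : ℝ)) * ∑ t : Fin M, if (t : ℕ) < (m : ℕ) then L (σ t) else 0 := by
  have hne : ∀ k : Fin M, (k : ℕ) < (m : ℕ) → k ≠ m := by
    intro k hk he; rw [he] at hk; omega
  have hq : q m (Function.update σ m j) = q m σ := hdep m _ _ (fun k hk =>
    Function.update_of_ne (hne k hk) j σ)
  unfold aTerm
  rw [hq, Function.update_self]
  congr 1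
  refine congrArg _ (Finset.sum_congr rfl fun t _ => ?_)
  by_cases ht : (t : ℕ) < (m : ℕ)
  · rw [if_pos ht, if_pos ht, Function.update_of_ne (hne t ht) j σ]
  · rw [if_neg ht, if_neg ht]

include hdep hpos hzero hsum in
lemma condMean (hN : 0 < N) (m : Fin M) (σ : Fin M → Fin N)
    (hσ : Function.Injective σ) :
    ∑ j : Fin N, q m σ j * aTerm N M L q m (Function.update σ m j)
      = (∑ i : Fin N, L i) / (N : ℝ) := by
  have hNne : (N : ℝ) ≠ 0 := Nat.cast_ne_zero.mpr hN.ne'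
  set P : Fin N → Prop := fun j => ∀ k : Fin M, (k : ℕ) < (m : ℕ) → σ k ≠ j with hP
  set S : ℝ := ∑ t : Fin M, if (t : ℕ) < (m : ℕ) then L (σ t) else 0 with hS
  have h1 : ∀ j : Fin N, q m σ j * aTerm N M L q m (Function.update σ m j)
      = q m σ j * (L j / ((N : ℝ) * q m σ j)) + q m σ j * ((1 / (N : ℝ)) * S) := by
    intro j
    rw [aTerm_update L q hdep m σ j]
    ring
  rw [Finset.sum_congr rfl (fun j _ => h1 j), Finset.sum_add_distrib,
    ← Finset.sum_mul, hsum m σ, one_mul]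
  have h2 : ∀ j : Fin N, q m σ j * (L j / ((N : ℝ) * q m σ j))
      = if P j then L j / (N : ℝ) else 0 := by
    intro j
    by_cases hj : P j
    · have hq : 0 < q m σ j := hpos m σ j hj
      rw [if_pos hj]
      field_simp
    · rw [if_neg hj]
      have : ∃ k : Fin M, (k : ℕ) < (m : ℕ) ∧ σ k = j := by
        simp only [hP] at hj; push_neg at hj; exact hj
      rw [hzero m σ j this]
      simp
  rw [Finset.sum_congr rfl (fun j _ => h2 j)]
  have hsplit : ∀ j : Fin N, (if P j then L j / (N : ℝ) else 0)
      = L j / (N : ℝ) - (if ¬ P j then L j / (N : ℝ) else 0) := by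
    intro j
    by_cases hj : P j
    · rw [if_pos hj, if_neg (not_not_intro hj)]; ring
    · rw [if_neg hj, if_pos hj]; ring
  rw [Finset.sum_congr rfl (fun j _ => hsplit j), Finset.sum_sub_distrib]
  have himg : (Finset.univ.filter (fun t : Fin M => (t : ℕ) < (m : ℕ))).image σ
      = Finset.univ.filter (fun j : Fin N => ¬ P j) := by
    ext j
    simp only [Finset.mem_image, Finset.mem_filter, Finset.mem_univ, true_and, hP]
    push_neg
    constructor
    · rintro ⟨t, ht, rfl⟩; exact ⟨t, ht, rfl⟩
    · rintro ⟨t, ht, h⟩; exact ⟨t, ht, h⟩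
  have hT : ∑ j : Fin N, (if ¬ P j then L j / (N : ℝ) else 0)
      = ∑ t : Fin M, (if (t : ℕ) < (m : ℕ) then L (σ t) / (N : ℝ) else 0) := by
    rw [← Finset.sum_filter, ← Finset.sum_filter, ← himg,
      Finset.sum_image (fun a _ b _ h => hσ h)]
  have hT2 : ∑ t : Fin M, (if (t : ℕ) < (m : ℕ) then L (σ t) / (N : ℝ) else 0)
      = S / (N : ℝ) := by
    rw [hS, Finset.sum_div]
    refine Finset.sum_congr rfl (fun t _ => ?_)
    split <;> simp
  rw [hT, hT2, ← Finset.sum_div]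
  ring

noncomputable def eT (m : Fin M) (σ : Fin M → Fin N) : ℝ :=
  aTerm N M L q m σ - (∑ i : Fin N, L i) / (N : ℝ)

lemma var_expand {ι : Type*} [Fintype ι] (p w : ι → ℝ) (c : ℝ)
    (hp : ∑ i : ι, p i = 1) (hmean : ∑ i : ι, p i * w i = -c) :
    ∑ i : ι, p i * (w i + c) ^ 2
      = (∑ i : ι, p i * (w i) ^ 2) - (∑ i : ι, p i * w i) ^ 2 := by
  have expand : ∀ i : ι, p i * (w i + c) ^ 2
      = p i * (w i) ^ 2 + (2 * c) * (p i * w i) + c ^ 2 * p i := fun i => by ring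
  rw [Finset.sum_congr rfl fun i _ => expand i, Finset.sum_add_distrib,
    Finset.sum_add_distrib, ← Finset.mul_sum, ← Finset.mul_sum, hp, hmean]
  ring

include hdep in
lemma aTerm_dep (m : Fin M) : DepLT ((m : ℕ) + 1) (aTerm N M L q m) := by
  intro σ σ' h
  have hσm : σ m = σ' m := h m (Nat.lt_succ_self _)
  have hq : q m σ = q m σ' := hdep m σ σ' (fun k hk => h k (by omega))
  unfold aTerm
  rw [hσm, hq]
  congr 1
  refine congrArg _ (Finset.sum_congr rfl fun t _ => ?_)
  by_cases ht : (t : ℕ) < (m : ℕ)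
  · rw [if_pos ht, if_pos ht, h t (by omega)]
  · rw [if_neg ht, if_neg ht]

include hdep in
lemma eT_dep (m : Fin M) : DepLT ((m : ℕ) + 1) (eT L q m) := by
  intro σ σ' h
  simp only [eT]
  rw [aTerm_dep L q hdep m σ σ' h]

include hdep hpos hzero hsum in
lemma condMean0 (hN : 0 < N) (m : Fin M) (σ : Fin M → Fin N)
    (hσ : Function.Injective σ) :
    ∑ j : Fin N, q m σ j * eT L q m (Function.update σ m j) = 0 := by
  have h1 : ∀ j : Fin N, q m σ j * eT L q m (Function.update σ m j)
      = q m σ j * aTerm N M L q m (Function.update σ m j)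
        - q m σ j * ((∑ i : Fin N, L i) / (N : ℝ)) := by
    intro j; simp only [eT]; ring
  rw [Finset.sum_congr rfl (fun j _ => h1 j), Finset.sum_sub_distrib,
    condMean L q hdep hpos hzero hsum hN m σ hσ, ← Finset.sum_mul, hsum m σ,
    one_mul, sub_self]

include hdep hpos hzero hsum in
lemma condSq (hN : 0 < N) (m : Fin M) (σ : Fin M → Fin N)
    (hσ : Function.Injective σ) :
    ∑ j : Fin N, q m σ j * (eT L q m (Function.update σ m j)) ^ 2
      = condVar N M L q m σ := by
  have hup : ∀ j : Fin N, eT L q m (Function.update σ m j)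
      = L j / ((N : ℝ) * q m σ j)
        + ((1 / (N : ℝ)) * (∑ t : Fin M, if (t : ℕ) < (m : ℕ) then L (σ t) else 0)
            - (∑ i : Fin N, L i) / (N : ℝ)) := by
    intro j
    simp only [eT]
    rw [aTerm_update L q hdep m σ j]
    ring
  rw [Finset.sum_congr rfl (fun j _ => by rw [hup j])]
  have hmean : ∑ j : Fin N, q m σ j * (L j / ((N : ℝ) * q m σ j))
      = -((1 / (N : ℝ)) * (∑ t : Fin M, if (t : ℕ) < (m : ℕ) then L (σ t) else 0)
            - (∑ i : Fin N, L i) / (N : ℝ)) := by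
    have hA := condMean L q hdep hpos hzero hsum hN m σ hσ
    have h1 : ∀ j : Fin N, q m σ j * aTerm N M L q m (Function.update σ m j)
        = q m σ j * (L j / ((N : ℝ) * q m σ j))
          + q m σ j * ((1 / (N : ℝ))
              * (∑ t : Fin M, if (t : ℕ) < (m : ℕ) then L (σ t) else 0)) := by
      intro j
      rw [aTerm_update L q hdep m σ j]
      ring
    rw [Finset.sum_congr rfl (fun j _ => h1 j), Finset.sum_add_distrib,
      ← Finset.sum_mul, hsum m σ, one_mul] at hA
    linarith
  rw [var_expand (q m σ) (fun j => L j / ((N : ℝ) * q m σ j)) _ (hsum m σ) hmean]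
  rfl

include hdep hpos hzero hsum in
lemma expec_eT (hN : 0 < N) (m : Fin M) : expec N M q (eT L q m) = 0 := by
  rw [tower q hdep hzero hsum hN m (eT L q m) (eT_dep L q hdep m)]
  refine (expec_congr q (g := fun _ => (0 : ℝ)) ?_).trans (expec_zero q)
  intro σ hσ
  exact condMean0 L q hdep hpos hzero hsum hN m σ hσ

include hdep hpos hzero hsum in
lemma expec_cross (hN : 0 < N) (m k : Fin M) (hmk : (m : ℕ) < (k : ℕ)) :
    expec N M q (fun σ => eT L q m σ * eT L q k σ) = 0 := by
  have hdepf : DepLT ((k : ℕ) + 1) (fun σ => eT L q m σ * eT L q k σ) := by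
    intro σ σ' h
    dsimp only
    rw [eT_dep L q hdep m σ σ' (fun t ht => h t (by omega)),
      eT_dep L q hdep k σ σ' h]
  rw [tower q hdep hzero hsum hN k _ hdepf]
  refine (expec_congr q (g := fun _ => (0 : ℝ)) ?_).trans (expec_zero q)
  intro σ hσ
  have hupd : ∀ j : Fin N, eT L q m (Function.update σ k j) = eT L q m σ := by
    intro j
    refine eT_dep L q hdep m _ _ (fun t ht => ?_)
    have hne : t ≠ k := fun he => by rw [he] at ht; omega
    exact Function.update_of_ne hne j σ
  calc ∑ j : Fin N, q k σ j
        * (eT L q m (Function.update σ k j) * eT L q k (Function.update σ k j))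
      = eT L q m σ * ∑ j : Fin N, q k σ j * eT L q k (Function.update σ k j) := by
        rw [Finset.mul_sum]
        refine Finset.sum_congr rfl fun j _ => ?_
        rw [hupd j]; ring
    _ = 0 := by rw [condMean0 L q hdep hpos hzero hsum hN k σ hσ, mul_zero]

include hdep hpos hzero hsum in
lemma expec_sq (hN : 0 < N) (m : Fin M) :
    expec N M q (fun σ => eT L q m σ * eT L q m σ)
      = expec N M q (condVar N M L q m) := by
  have hdepf : DepLT ((m : ℕ) + 1) (fun σ => eT L q m σ * eT L q m σ) := by
    intro σ σ' h
    dsimp only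
    rw [eT_dep L q hdep m σ σ' h]
  rw [tower q hdep hzero hsum hN m _ hdepf]
  refine expec_congr q ?_
  intro σ hσ
  calc ∑ j : Fin N, q m σ j
        * (eT L q m (Function.update σ m j) * eT L q m (Function.update σ m j))
      = ∑ j : Fin N, q m σ j * (eT L q m (Function.update σ m j)) ^ 2 := by
        refine Finset.sum_congr rfl fun j _ => ?_; ring
    _ = condVar N M L q m σ := condSq L q hdep hpos hzero hsum hN m σ hσ

include hdep hpos hzero hsum in
lemma final (hN : 0 < N) (c : Fin M → ℝ) :
    expec N M q (fun σ => ((1 / (M : ℝ)) * ∑ m : Fin M, c m * aTerm N M L q m σ) ^ 2)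
        - (expec N M q (fun σ => (1 / (M : ℝ)) * ∑ m : Fin M, c m * aTerm N M L q m σ)) ^ 2
      = (1 / (M : ℝ) ^ 2) * ∑ m : Fin M, (c m) ^ 2 * expec N M q (condVar N M L q m) := by
  set Lb : ℝ := (∑ i : Fin N, L i) / (N : ℝ) with hLb
  set K : ℝ := (1 / (M : ℝ)) * ∑ m : Fin M, c m * Lb with hK
  have hconst : ∀ r : ℝ, expec N M q (fun _ => r) = r := by
    intro r
    have h : (fun _ : Fin M → Fin N => r)
        = fun σ : Fin M → Fin N => r * (fun _ : Fin M → Fin N => (1 : ℝ)) σ := by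
      funext σ; ring
    rw [h, expec_smul, mass_one q hdep hzero hsum hN, mul_one]
  have hXeq : ∀ σ : Fin M → Fin N,
      (1 / (M : ℝ)) * ∑ m : Fin M, c m * aTerm N M L q m σ
        = (1 / (M : ℝ)) * (∑ m : Fin M, c m * eT L q m σ) + K := by
    intro σ
    rw [hK]
    have : ∀ m : Fin M, c m * aTerm N M L q m σ = c m * eT L q m σ + c m * Lb := by
      intro m; simp only [eT, hLb]; ring
    rw [Finset.sum_congr rfl fun m _ => this m, Finset.sum_add_distrib]
    ring
  have hE0 : expec N M q (fun σ => (1 / (M : ℝ)) * (∑ m : Fin M, c m * eT L q m σ)) = 0 := by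
    rw [expec_smul, expec_sum]
    have h : ∀ m : Fin M, expec N M q (fun σ => c m * eT L q m σ) = 0 := by
      intro m
      rw [expec_smul, expec_eT L q hdep hpos hzero hsum hN m, mul_zero]
    rw [Finset.sum_congr rfl fun m _ => h m]
    simp
  have hEX : expec N M q (fun σ => (1 / (M : ℝ)) * ∑ m : Fin M, c m * aTerm N M L q m σ) = K := by
    have h : (fun σ : Fin M → Fin N => (1 / (M : ℝ)) * ∑ m : Fin M, c m * aTerm N M L q m σ)
        = fun σ => (1 / (M : ℝ)) * (∑ m : Fin M, c m * eT L q m σ) + (fun _ : Fin M → Fin N => K) σ := by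
      funext σ; rw [hXeq σ]
    rw [h, expec_add, hE0, hconst, zero_add]
  have hEpair : ∀ m k : Fin M,
      expec N M q (fun σ => (c m * eT L q m σ) * (c k * eT L q k σ))
        = (c m * c k) * expec N M q (fun σ => eT L q m σ * eT L q k σ) := by
    intro m k
    have h : (fun σ : Fin M → Fin N => (c m * eT L q m σ) * (c k * eT L q k σ))
        = fun σ => (c m * c k) * (fun σ' => eT L q m σ' * eT L q k σ') σ := by
      funext σ; ring
    rw [h, expec_smul]
  have hcross0 : ∀ m k : Fin M, m ≠ k →
      expec N M q (fun σ => eT L q m σ * eT L q k σ) = 0 := by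
    intro m k hmk
    rcases Ne.lt_or_gt hmk with h | h
    · exact expec_cross L q hdep hpos hzero hsum hN m k h
    · have := expec_cross L q hdep hpos hzero hsum hN k m h
      have heq : (fun σ : Fin M → Fin N => eT L q m σ * eT L q k σ)
          = fun σ => eT L q k σ * eT L q m σ := by funext σ; ring
      rw [heq, this]
  have hdiag : ∀ m : Fin M,
      ∑ k : Fin M, (c m * c k) * expec N M q (fun σ => eT L q m σ * eT L q k σ)
        = (c m) ^ 2 * expec N M q (condVar N M L q m) := by
    intro m
    rw [Finset.sum_eq_single m
      (fun k _ hk => by rw [hcross0 m k (Ne.symm hk), mul_zero])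
      (fun h => absurd (Finset.mem_univ m) h)]
    rw [expec_sq L q hdep hpos hzero hsum hN m]
    ring
  have hEX2 : expec N M q (fun σ => ((1 / (M : ℝ)) * ∑ m : Fin M, c m * aTerm N M L q m σ) ^ 2)
      = (1 / (M : ℝ)) ^ 2 * (∑ m : Fin M, (c m) ^ 2 * expec N M q (condVar N M L q m)) + K ^ 2 := by
    have h : (fun σ : Fin M → Fin N => ((1 / (M : ℝ)) * ∑ m : Fin M, c m * aTerm N M L q m σ) ^ 2)
        = fun σ => (1 / (M : ℝ)) ^ 2
              * (∑ m : Fin M, ∑ k : Fin M, (c m * eT L q m σ) * (c k * eT L q k σ))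
            + ((2 * K) * ((1 / (M : ℝ)) * (∑ m : Fin M, c m * eT L q m σ))
                + (fun _ : Fin M → Fin N => K ^ 2) σ) := by
      funext σ
      rw [hXeq σ]
      have e1 : ∑ m : Fin M, ∑ k : Fin M, (c m * eT L q m σ) * (c k * eT L q k σ)
          = (∑ m : Fin M, c m * eT L q m σ) * (∑ k : Fin M, c k * eT L q k σ) :=
        (Finset.sum_mul_sum _ _ _ _).symm
      rw [e1]
      ring
    rw [h, expec_add, expec_add, expec_smul, expec_smul, hE0, hconst, mul_zero, zero_add]
    have hdouble : expec N M q
        (fun σ => ∑ m : Fin M, ∑ k : Fin M, (c m * eT L q m σ) * (c k * eT L q k σ))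
        = ∑ m : Fin M, (c m) ^ 2 * expec N M q (condVar N M L q m) := by
      rw [expec_sum]
      refine Finset.sum_congr rfl fun m _ => ?_
      rw [expec_sum, Finset.sum_congr rfl fun k _ => hEpair m k]
      exact hdiag m
    rw [hdouble]
  rw [hEX, hEX2]
  ring

end Prob

end LureAux


/-- Variance of the LURE estimator for a fixed pool:
`Var[R_LURE] = (1/M²)∑_m c_m²·E[Var[w_m·L(i_m) | i_{1:m-1}]]`, where
`R_LURE = (1/M)∑_m c_m·a_m`. (Zero-based `m : Fin M`.) -/
theorem lure_variance (N M : ℕ) (hM : 0 < M) (hMN : M ≤ N)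
    (L : Fin N → ℝ) (q : Fin M → (Fin M → Fin N) → Fin N → ℝ)
    (hdep : ∀ (m : Fin M) (σ σ' : Fin M → Fin N),
      (∀ k : Fin M, (k : ℕ) < (m : ℕ) → σ k = σ' k) → q m σ = q m σ')
    (hpos : ∀ (m : Fin M) (σ : Fin M → Fin N) (i : Fin N),
      (∀ k : Fin M, (k : ℕ) < (m : ℕ) → σ k ≠ i) → 0 < q m σ i)
    (hzero : ∀ (m : Fin M) (σ : Fin M → Fin N) (i : Fin N),
      (∃ k : Fin M, (k : ℕ) < (m : ℕ) ∧ σ k = i) → q m σ i = 0)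
    (hsum : ∀ (m : Fin M) (σ : Fin M → Fin N), ∑ i : Fin N, q m σ i = 1) :
    expec N M q (fun σ => ((1 / (M : ℝ)) * ∑ m : Fin M,
          ((N : ℝ) * ((N : ℝ) - (M : ℝ)) / (((N : ℝ) - ((m : ℕ) : ℝ) - 1) * ((N : ℝ) - ((m : ℕ) : ℝ)))) * aTerm N M L q m σ) ^ 2)
        - (expec N M q (fun σ => (1 / (M : ℝ)) * ∑ m : Fin M,
            ((N : ℝ) * ((N : ℝ) - (M : ℝ)) / (((N : ℝ) - ((m : ℕ) : ℝ) - 1) * ((N : ℝ) - ((m : ℕ) : ℝ)))) * aTerm N M L q m σ)) ^ 2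
      = (1 / (M : ℝ) ^ 2) * ∑ m : Fin M,
          ((N : ℝ) * ((N : ℝ) - (M : ℝ)) / (((N : ℝ) - ((m : ℕ) : ℝ) - 1) * ((N : ℝ) - ((m : ℕ) : ℝ)))) ^ 2 * expec N M q (condVar N M L q m) := by
  have hN : 0 < N := lt_of_lt_of_le hM hMN
  exact LureAux.final L q hdep hpos hzero hsum hN
    (fun m => (N : ℝ) * ((N : ℝ) - (M : ℝ)) / (((N : ℝ) - ((m : ℕ) : ℝ) - 1) * ((N : ℝ) - ((m : ℕ) : ℝ))))
end
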